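/- arXiv:2211.14754 — 3 statements merged into one kernel-verified Lean document; each statement's English description precedes it below -/
import Mathlib

section
/- Let A and B be Frobenius algebras over k with pairings β_A = ε_A∘∇_A, β_B = ε_B∘∇_B and co-pairings α_A = Δ_A∘η_A, α_B = Δ_B∘η_B, and let τ : B⊗A → A⊗B be a twisting map satisfying the comultiplication-compatibility condition (Δ_A⊗Δ_B)∘τ = (1_A⊗τ⊗1_B)∘(τ⊗τ)∘(1_B⊗τ⊗1_A)∘(Δ_B⊗Δ_A). Then β_{A⊗_τ B} := (k⊗k ≅ k)∘(β_A⊗β_B)∘(1_A⊗τ⊗1_B) and α_{A⊗_τ B} := (1_A⊗τ^{-1}⊗1_B)∘(α_A⊗α_B)∘(k ≅ k⊗k) are, respectively, an associative non-degenerate pairing and a corresponding co-pairing for the twisted tensor product algebra A⊗_τ B. -/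
open scoped TensorProduct

namespace TTP

section Defs

variable (k : Type*) [Field k]

section MidMap

variable {X P Q Y R S : Type*}
  [AddCommGroup X] [Module k X] [AddCommGroup P] [Module k P]
  [AddCommGroup Q] [Module k Q] [AddCommGroup Y] [Module k Y]
  [AddCommGroup R] [Module k R] [AddCommGroup S] [Module k S]

/-- The map `1_X ⊗ f ⊗ 1_Y` (with the canonical reassociations). -/
noncomputable def midMap (f : P ⊗[k] Q →ₗ[k] R ⊗[k] S) :
    (X ⊗[k] P) ⊗[k] (Q ⊗[k] Y) →ₗ[k] (X ⊗[k] R) ⊗[k] (S ⊗[k] Y) :=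
  (TensorProduct.assoc k (X ⊗[k] R) S Y).toLinearMap
    ∘ₗ TensorProduct.map (TensorProduct.assoc k X R S).symm.toLinearMap LinearMap.id
    ∘ₗ TensorProduct.map (TensorProduct.map LinearMap.id f) LinearMap.id
    ∘ₗ TensorProduct.map (TensorProduct.assoc k X P Q).toLinearMap LinearMap.id
    ∘ₗ (TensorProduct.assoc k (X ⊗[k] P) Q Y).symm.toLinearMap

end MidMap

variable {A B : Type*} [AddCommGroup A] [Module k A] [AddCommGroup B] [Module k B]

/-- `(A, mul, unit)` is a unital associative `k`-algebra (diagrammatically). -/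
def IsUnitalAssoc (mul : A ⊗[k] A →ₗ[k] A) (unit : k →ₗ[k] A) : Prop :=
  mul ∘ₗ TensorProduct.map unit LinearMap.id ∘ₗ (TensorProduct.lid k A).symm.toLinearMap
      = LinearMap.id
  ∧ mul ∘ₗ TensorProduct.map LinearMap.id unit ∘ₗ (TensorProduct.rid k A).symm.toLinearMap
      = LinearMap.id
  ∧ mul ∘ₗ TensorProduct.map mul LinearMap.id
      = mul ∘ₗ TensorProduct.map LinearMap.id mul ∘ₗ (TensorProduct.assoc k A A A).toLinearMap

/-- `(A, comul, counit)` is a counital coassociative `k`-coalgebra (diagrammatically). -/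
def IsCounitalCoassoc (comul : A →ₗ[k] A ⊗[k] A) (counit : A →ₗ[k] k) : Prop :=
  (TensorProduct.lid k A).toLinearMap ∘ₗ TensorProduct.map counit LinearMap.id ∘ₗ comul
      = LinearMap.id
  ∧ (TensorProduct.rid k A).toLinearMap ∘ₗ TensorProduct.map LinearMap.id counit ∘ₗ comul
      = LinearMap.id
  ∧ TensorProduct.map comul LinearMap.id ∘ₗ comul
      = (TensorProduct.assoc k A A A).symm.toLinearMap
          ∘ₗ TensorProduct.map LinearMap.id comul ∘ₗ comul

/-- `τ : B ⊗ A → A ⊗ B` is a twisting map for the algebras `A` and `B`: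
it is compatible with both units and with both multiplications. -/
def IsTwisting (mulA : A ⊗[k] A →ₗ[k] A) (unitA : k →ₗ[k] A)
    (mulB : B ⊗[k] B →ₗ[k] B) (unitB : k →ₗ[k] B)
    (τ : B ⊗[k] A →ₗ[k] A ⊗[k] B) : Prop :=
  τ ∘ₗ TensorProduct.map LinearMap.id unitA
      = TensorProduct.map unitA LinearMap.id ∘ₗ (TensorProduct.comm k B k).toLinearMap
  ∧ τ ∘ₗ TensorProduct.map unitB LinearMap.id
      = TensorProduct.map LinearMap.id unitB ∘ₗ (TensorProduct.comm k k A).toLinearMap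
  ∧ τ ∘ₗ TensorProduct.map mulB mulA
      = TensorProduct.map mulA mulB ∘ₗ midMap k τ ∘ₗ TensorProduct.map τ τ ∘ₗ midMap k τ

/-- The multiplication `(∇_A ⊗ ∇_B) ∘ (1 ⊗ τ ⊗ 1)` of the twisted tensor product. -/
noncomputable def tMul (mulA : A ⊗[k] A →ₗ[k] A) (mulB : B ⊗[k] B →ₗ[k] B)
    (τ : B ⊗[k] A →ₗ[k] A ⊗[k] B) :
    (A ⊗[k] B) ⊗[k] (A ⊗[k] B) →ₗ[k] A ⊗[k] B :=
  TensorProduct.map mulA mulB ∘ₗ midMap k τ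

/-- The unit `(η_A ⊗ η_B) ∘ (k ≅ k ⊗ k)` of the twisted tensor product. -/
noncomputable def tUnit (unitA : k →ₗ[k] A) (unitB : k →ₗ[k] B) : k →ₗ[k] A ⊗[k] B :=
  TensorProduct.map unitA unitB ∘ₗ (TensorProduct.lid k k).symm.toLinearMap

/-- The comultiplication `(1 ⊗ τ⁻¹ ⊗ 1) ∘ (Δ_A ⊗ Δ_B)` of the twisted tensor product. -/
noncomputable def tComul (comulA : A →ₗ[k] A ⊗[k] A) (comulB : B →ₗ[k] B ⊗[k] B)
    (τinv : A ⊗[k] B →ₗ[k] B ⊗[k] A) :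
    A ⊗[k] B →ₗ[k] (A ⊗[k] B) ⊗[k] (A ⊗[k] B) :=
  midMap k τinv ∘ₗ TensorProduct.map comulA comulB

/-- The counit `(k ⊗ k ≅ k) ∘ (ε_A ⊗ ε_B)` of the twisted tensor product. -/
noncomputable def tCounit (counitA : A →ₗ[k] k) (counitB : B →ₗ[k] k) :
    A ⊗[k] B →ₗ[k] k :=
  (TensorProduct.lid k k).toLinearMap ∘ₗ TensorProduct.map counitA counitB

/-- Compatibility of `τ` with the counits (diagram (5) of the paper). -/
def CounitCompat (counitA : A →ₗ[k] k) (counitB : B →ₗ[k] k)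
    (τ : B ⊗[k] A →ₗ[k] A ⊗[k] B) : Prop :=
  TensorProduct.map counitA LinearMap.id ∘ₗ τ
      = (TensorProduct.comm k B k).toLinearMap ∘ₗ TensorProduct.map LinearMap.id counitA
  ∧ TensorProduct.map LinearMap.id counitB ∘ₗ τ
      = (TensorProduct.comm k k A).toLinearMap ∘ₗ TensorProduct.map counitB LinearMap.id

/-- Compatibility of `τ` with the comultiplications (diagram (6) of the paper):
`(Δ_A ⊗ Δ_B)∘τ = (1⊗τ⊗1)∘(τ⊗τ)∘(1⊗τ⊗1)∘(Δ_B ⊗ Δ_A)`. -/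
def ComulCompat (comulA : A →ₗ[k] A ⊗[k] A) (comulB : B →ₗ[k] B ⊗[k] B)
    (τ : B ⊗[k] A →ₗ[k] A ⊗[k] B) : Prop :=
  TensorProduct.map comulA comulB ∘ₗ τ
      = midMap k τ ∘ₗ TensorProduct.map τ τ ∘ₗ midMap k τ ∘ₗ TensorProduct.map comulB comulA

/-- `(f ⊗ 1_B) ∘ τ = (1_A ⊗ τ) ∘ (τ ⊗ 1_A) ∘ (1_B ⊗ f)` for `f : A → A ⊗ A`. -/
def MidACompat (f : A →ₗ[k] A ⊗[k] A) (τ : B ⊗[k] A →ₗ[k] A ⊗[k] B) : Prop :=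
  TensorProduct.map f LinearMap.id ∘ₗ τ
    = (TensorProduct.assoc k A A B).symm.toLinearMap
      ∘ₗ TensorProduct.map LinearMap.id τ
      ∘ₗ (TensorProduct.assoc k A B A).toLinearMap
      ∘ₗ TensorProduct.map τ LinearMap.id
      ∘ₗ (TensorProduct.assoc k B A A).symm.toLinearMap
      ∘ₗ TensorProduct.map LinearMap.id f

/-- `(1_A ⊗ g) ∘ τ = (τ ⊗ 1_B) ∘ (1_B ⊗ τ) ∘ (g ⊗ 1_A)` for `g : B → B ⊗ B`. -/
def MidBCompat (g : B →ₗ[k] B ⊗[k] B) (τ : B ⊗[k] A →ₗ[k] A ⊗[k] B) : Prop :=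
  TensorProduct.map LinearMap.id g ∘ₗ τ
    = (TensorProduct.assoc k A B B).toLinearMap
      ∘ₗ TensorProduct.map τ LinearMap.id
      ∘ₗ (TensorProduct.assoc k B A B).symm.toLinearMap
      ∘ₗ TensorProduct.map LinearMap.id τ
      ∘ₗ (TensorProduct.assoc k B B A).toLinearMap
      ∘ₗ TensorProduct.map g LinearMap.id

/-- `(A, mul, unit, comul, counit)` is a Frobenius algebra (diagrammatically). -/
def IsFrobenius (mul : A ⊗[k] A →ₗ[k] A) (unit : k →ₗ[k] A)
    (comul : A →ₗ[k] A ⊗[k] A) (counit : A →ₗ[k] k) : Prop :=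
  IsUnitalAssoc k mul unit
  ∧ IsCounitalCoassoc k comul counit
  ∧ comul ∘ₗ mul
      = TensorProduct.map LinearMap.id mul ∘ₗ (TensorProduct.assoc k A A A).toLinearMap
          ∘ₗ TensorProduct.map comul LinearMap.id
  ∧ comul ∘ₗ mul
      = TensorProduct.map mul LinearMap.id ∘ₗ (TensorProduct.assoc k A A A).symm.toLinearMap
          ∘ₗ TensorProduct.map LinearMap.id comul

/-- `(A, mul, unit, comul, counit)` is a bialgebra (diagrammatically). -/
def IsBialgebra (mul : A ⊗[k] A →ₗ[k] A) (unit : k →ₗ[k] A)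
    (comul : A →ₗ[k] A ⊗[k] A) (counit : A →ₗ[k] k) : Prop :=
  IsUnitalAssoc k mul unit
  ∧ IsCounitalCoassoc k comul counit
  ∧ counit ∘ₗ mul = (TensorProduct.lid k k).toLinearMap ∘ₗ TensorProduct.map counit counit
  ∧ comul ∘ₗ unit = TensorProduct.map unit unit ∘ₗ (TensorProduct.lid k k).symm.toLinearMap
  ∧ counit ∘ₗ unit = LinearMap.id
  ∧ comul ∘ₗ mul
      = TensorProduct.map mul mul ∘ₗ midMap k (TensorProduct.comm k A A).toLinearMap
          ∘ₗ TensorProduct.map comul comul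

/-- `(A, mul, unit, comul, counit)` is a Hopf algebra: a bialgebra with an antipode. -/
def IsHopf (mul : A ⊗[k] A →ₗ[k] A) (unit : k →ₗ[k] A)
    (comul : A →ₗ[k] A ⊗[k] A) (counit : A →ₗ[k] k) : Prop :=
  IsBialgebra k mul unit comul counit
  ∧ ∃ S : A →ₗ[k] A,
      mul ∘ₗ TensorProduct.map S LinearMap.id ∘ₗ comul = unit ∘ₗ counit
      ∧ mul ∘ₗ TensorProduct.map LinearMap.id S ∘ₗ comul = unit ∘ₗ counit

/-- `Γ` is a right inverse of the multiplication which is a bimodule morphism,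
witnessing separability of the algebra. -/
def IsSeparableWith (mul : A ⊗[k] A →ₗ[k] A) (Γ : A →ₗ[k] A ⊗[k] A) : Prop :=
  mul ∘ₗ Γ = LinearMap.id
  ∧ Γ ∘ₗ mul ∘ₗ TensorProduct.map LinearMap.id mul
      = TensorProduct.map mul mul
          ∘ₗ (TensorProduct.assoc k A A (A ⊗[k] A)).symm.toLinearMap
          ∘ₗ TensorProduct.map LinearMap.id (TensorProduct.assoc k A A A).toLinearMap
          ∘ₗ TensorProduct.map LinearMap.id (TensorProduct.map Γ LinearMap.id)

/-- The pairing `β` is associative: `β∘(1⊗∇) = β∘(∇⊗1)`. -/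
def PairingAssoc (mul : A ⊗[k] A →ₗ[k] A) (β : A ⊗[k] A →ₗ[k] k) : Prop :=
  β ∘ₗ TensorProduct.map LinearMap.id mul ∘ₗ (TensorProduct.assoc k A A A).toLinearMap
    = β ∘ₗ TensorProduct.map mul LinearMap.id

/-- The pairing `β` is non-degenerate with co-pairing `α`:
`(1⊗β)∘(α⊗1) = 1_A` under the canonical isomorphisms. -/
def PairingNondeg (β : A ⊗[k] A →ₗ[k] k) (α : k →ₗ[k] A ⊗[k] A) : Prop :=
  (TensorProduct.rid k A).toLinearMap
      ∘ₗ TensorProduct.map LinearMap.id β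
      ∘ₗ (TensorProduct.assoc k A A A).toLinearMap
      ∘ₗ TensorProduct.map α LinearMap.id
      ∘ₗ (TensorProduct.lid k A).symm.toLinearMap = LinearMap.id

/-- The pairing `β` is symmetric: `β ∘ σ = β` for the flip `σ`. -/
def PairingSymm (β : A ⊗[k] A →ₗ[k] k) : Prop :=
  β ∘ₗ (TensorProduct.comm k A A).toLinearMap = β

end Defs

end TTP

namespace TTPAux
open TensorProduct TTP

variable {k : Type*} [Field k]

section Sandwich
variable {X P Q Y R S R' S' : Type*}
  [AddCommGroup X] [Module k X] [AddCommGroup P] [Module k P]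
  [AddCommGroup Q] [Module k Q] [AddCommGroup Y] [Module k Y]
  [AddCommGroup R] [Module k R] [AddCommGroup S] [Module k S]
  [AddCommGroup R'] [Module k R'] [AddCommGroup S'] [Module k S']

/-- `z ↦ (x ⊗ z₁) ⊗ (z₂ ⊗ y)`. -/
noncomputable def sw (x : X) (y : Y) : R ⊗[k] S →ₗ[k] (X ⊗[k] R) ⊗[k] (S ⊗[k] Y) :=
  TensorProduct.lift (LinearMap.mk₂ k (fun r s => (x ⊗ₜ r) ⊗ₜ (s ⊗ₜ y))
    (fun r r' s => by simp [tmul_add, add_tmul])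
    (fun c r s => by simp [tmul_smul, smul_tmul])
    (fun r s s' => by simp [tmul_add, add_tmul])
    (fun c r s => by simp [tmul_smul, smul_tmul]))

@[simp] lemma sw_tmul (x : X) (y : Y) (r : R) (s : S) :
    sw (k := k) x y (r ⊗ₜ s) = (x ⊗ₜ r) ⊗ₜ (s ⊗ₜ y) := rfl

lemma midMap_apply (f : P ⊗[k] Q →ₗ[k] R ⊗[k] S) (x : X) (p : P) (q : Q) (y : Y) :
    midMap k f ((x ⊗ₜ p) ⊗ₜ (q ⊗ₜ y)) = sw x y (f (p ⊗ₜ q)) := by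
  have h : ∀ z : R ⊗[k] S,
      (TensorProduct.assoc k (X ⊗[k] R) S Y)
        (TensorProduct.map (TensorProduct.assoc k X R S).symm.toLinearMap LinearMap.id
          ((x ⊗ₜ z) ⊗ₜ y)) = sw x y z := by
    intro z
    induction z using TensorProduct.induction_on with
    | zero => simp
    | tmul r s => simp
    | add u v hu hv => simp only [tmul_add, add_tmul, map_add, hu, hv]
  simp only [midMap, LinearMap.comp_apply, LinearEquiv.coe_coe, assoc_symm_tmul,
    map_tmul, assoc_tmul, LinearMap.id_apply]
  exact h (f (p ⊗ₜ q))

lemma midMap_sw (f : R ⊗[k] S →ₗ[k] R' ⊗[k] S') (x : X) (y : Y) (z : R ⊗[k] S) :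
    midMap k f (sw x y z) = sw x y (f z) := by
  induction z using TensorProduct.induction_on with
  | zero => simp
  | tmul r s => simp [midMap_apply]
  | add u v hu hv => simp [hu, hv]

lemma map_id_map_id_sw (f : Y →ₗ[k] S') (x : X) (y : Y) (z : R ⊗[k] S) :
    TensorProduct.map LinearMap.id (TensorProduct.map LinearMap.id f) (sw (k := k) x y z)
      = sw x (f y) z := by
  induction z using TensorProduct.induction_on with
  | zero => simp
  | tmul r s => simp
  | add u v hu hv => simp [hu, hv]

lemma map_map_id_id_sw (f : X →ₗ[k] R') (x : X) (y : Y) (z : R ⊗[k] S) :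
    TensorProduct.map (TensorProduct.map f LinearMap.id) LinearMap.id (sw (k := k) x y z)
      = sw (f x) y z := by
  induction z using TensorProduct.induction_on with
  | zero => simp
  | tmul r s => simp
  | add u v hu hv => simp [hu, hv]

end Sandwich

variable {A B : Type*} [AddCommGroup A] [Module k A] [AddCommGroup B] [Module k B]

noncomputable def lmul (mul : A ⊗[k] A →ₗ[k] A) (a : A) : A →ₗ[k] A :=
  mul ∘ₗ TensorProduct.mk k A A a

noncomputable def rmul (mul : A ⊗[k] A →ₗ[k] A) (a : A) : A →ₗ[k] A :=
  mul ∘ₗ (TensorProduct.mk k A A).flip a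

@[simp] lemma lmul_apply (mul : A ⊗[k] A →ₗ[k] A) (a x : A) :
    lmul mul a x = mul (a ⊗ₜ x) := rfl

@[simp] lemma rmul_apply (mul : A ⊗[k] A →ₗ[k] A) (a x : A) :
    rmul mul a x = mul (x ⊗ₜ a) := rfl

section UnitalAssoc
variable {mul : A ⊗[k] A →ₗ[k] A} {unit : k →ₗ[k] A}

lemma mul_one_left (h : IsUnitalAssoc k mul unit) (a : A) :
    mul (unit 1 ⊗ₜ a) = a := by
  have := LinearMap.congr_fun h.1 a
  simpa using this

lemma mul_one_right (h : IsUnitalAssoc k mul unit) (a : A) :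
    mul (a ⊗ₜ unit 1) = a := by
  have := LinearMap.congr_fun h.2.1 a
  simpa using this

lemma mul_assoc' (h : IsUnitalAssoc k mul unit) (x y z : A) :
    mul (mul (x ⊗ₜ y) ⊗ₜ z) = mul (x ⊗ₜ mul (y ⊗ₜ z)) := by
  have := LinearMap.congr_fun h.2.2 ((x ⊗ₜ y) ⊗ₜ z)
  simpa using this

lemma lmul_mul (h : IsUnitalAssoc k mul unit) (a c : A) :
    lmul mul (mul (a ⊗ₜ c)) = lmul mul a ∘ₗ lmul mul c := by
  apply LinearMap.ext; intro x
  simp [mul_assoc' h]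

lemma rmul_mul (h : IsUnitalAssoc k mul unit) (c b : A) :
    rmul mul (mul (c ⊗ₜ b)) = rmul mul b ∘ₗ rmul mul c := by
  apply LinearMap.ext; intro x
  simp [mul_assoc' h]

end UnitalAssoc

section Counit
variable {comul : A →ₗ[k] A ⊗[k] A} {counit : A →ₗ[k] k}

lemma counit_left (h : IsCounitalCoassoc k comul counit) (a : A) :
    (TensorProduct.lid k A) ((TensorProduct.map counit LinearMap.id) (comul a)) = a := by
  have := LinearMap.congr_fun h.1 a
  simpa using this

lemma counit_right (h : IsCounitalCoassoc k comul counit) (a : A) :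
    (TensorProduct.rid k A) ((TensorProduct.map LinearMap.id counit) (comul a)) = a := by
  have := LinearMap.congr_fun h.2.1 a
  simpa using this

end Counit

section AssocHelpers
variable {W : Type*} [AddCommGroup W] [Module k W]

lemma map_mul_assoc_symm (mul : A ⊗[k] A →ₗ[k] A) (c : A) (z : A ⊗[k] W) :
    TensorProduct.map mul LinearMap.id ((TensorProduct.assoc k A A W).symm (c ⊗ₜ z))
      = TensorProduct.map (lmul mul c) LinearMap.id z := by
  induction z using TensorProduct.induction_on with
  | zero => simp
  | tmul r s => simp
  | add u v hu hv => simp only [tmul_add, map_add, hu, hv]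

lemma map_mul_assoc (mul : A ⊗[k] A →ₗ[k] A) (a : A) (z : W ⊗[k] A) :
    TensorProduct.map LinearMap.id mul ((TensorProduct.assoc k W A A) (z ⊗ₜ a))
      = TensorProduct.map LinearMap.id (rmul mul a) z := by
  induction z using TensorProduct.induction_on with
  | zero => simp
  | tmul r s => simp
  | add u v hu hv => simp only [add_tmul, map_add, hu, hv]

end AssocHelpers

section Casimir
variable {mulA : A ⊗[k] A →ₗ[k] A} {unitA : k →ₗ[k] A}
  {comulA : A →ₗ[k] A ⊗[k] A} {counitA : A →ₗ[k] k}

/-- `Δ(a) = Σ u₁ ⊗ u₂·a` (left Casimir form). -/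
lemma cas_left (hA : IsFrobenius k mulA unitA comulA counitA) (a : A) :
    comulA a = TensorProduct.map LinearMap.id (rmul mulA a) (comulA (unitA 1)) := by
  conv_lhs => rw [← mul_one_left hA.1 a]
  have := LinearMap.congr_fun hA.2.2.1 (unitA 1 ⊗ₜ a)
  simp only [LinearMap.comp_apply, map_tmul, LinearMap.id_apply, LinearEquiv.coe_coe] at this
  rw [this, map_mul_assoc]

/-- `Δ(a) = Σ a·u₁ ⊗ u₂` (right Casimir form). -/
lemma cas_right (hA : IsFrobenius k mulA unitA comulA counitA) (a : A) :
    comulA a = TensorProduct.map (lmul mulA a) LinearMap.id (comulA (unitA 1)) := by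
  conv_lhs => rw [← mul_one_right hA.1 a]
  have := LinearMap.congr_fun hA.2.2.2 (a ⊗ₜ unitA 1)
  simp only [LinearMap.comp_apply, map_tmul, LinearMap.id_apply, LinearEquiv.coe_coe] at this
  rw [this, map_mul_assoc_symm]

end Casimir

section Twisting
variable {mulA : A ⊗[k] A →ₗ[k] A} {unitA : k →ₗ[k] A}
variable {comulA : A →ₗ[k] A ⊗[k] A} {counitA : A →ₗ[k] k}
variable {mulB : B ⊗[k] B →ₗ[k] B} {unitB : k →ₗ[k] B}
variable {comulB : B →ₗ[k] B ⊗[k] B} {counitB : B →ₗ[k] k}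
variable {τ : B ⊗[k] A ≃ₗ[k] A ⊗[k] B}

lemma tau_one_right (hτ : IsTwisting k mulA unitA mulB unitB τ.toLinearMap) (b : B) :
    τ (b ⊗ₜ unitA 1) = unitA 1 ⊗ₜ b := by
  have := LinearMap.congr_fun hτ.1 (b ⊗ₜ (1 : k))
  simpa using this

lemma tau_one_left (hτ : IsTwisting k mulA unitA mulB unitB τ.toLinearMap) (a : A) :
    τ (unitB 1 ⊗ₜ a) = a ⊗ₜ unitB 1 := by
  have := LinearMap.congr_fun hτ.2.1 ((1 : k) ⊗ₜ a)
  simpa using this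

lemma tau_symm_one_right (hτ : IsTwisting k mulA unitA mulB unitB τ.toLinearMap) (b : B) :
    τ.symm (unitA 1 ⊗ₜ b) = b ⊗ₜ unitA 1 := by
  rw [← tau_one_right hτ b, LinearEquiv.symm_apply_apply]

lemma tau_symm_one_left (hτ : IsTwisting k mulA unitA mulB unitB τ.toLinearMap) (a : A) :
    τ.symm (a ⊗ₜ unitB 1) = unitB 1 ⊗ₜ a := by
  rw [← tau_one_left hτ a, LinearEquiv.symm_apply_apply]

lemma lmul_one (h : IsUnitalAssoc k mulA unitA) : lmul mulA (unitA 1) = LinearMap.id := by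
  apply LinearMap.ext; intro x; simp [mul_one_left h]

lemma rmul_one (h : IsUnitalAssoc k mulA unitA) : rmul mulA (unitA 1) = LinearMap.id := by
  apply LinearMap.ext; intro x; simp [mul_one_right h]

/-- `ΨA a' : c ⊗ d ↦ Σ c·τ(d⊗a')₁ ⊗ τ(d⊗a')₂`. -/
noncomputable def psiA (mulA : A ⊗[k] A →ₗ[k] A) (t : B ⊗[k] A →ₗ[k] A ⊗[k] B) (a' : A) :
    A ⊗[k] B →ₗ[k] A ⊗[k] B :=
  TensorProduct.map mulA LinearMap.id ∘ₗ (TensorProduct.assoc k A A B).symm.toLinearMap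
    ∘ₗ TensorProduct.map LinearMap.id (t ∘ₗ (TensorProduct.mk k B A).flip a')

@[simp] lemma psiA_tmul (t : B ⊗[k] A →ₗ[k] A ⊗[k] B) (a' : A) (c : A) (d : B) :
    psiA mulA t a' (c ⊗ₜ d)
      = TensorProduct.map (lmul mulA c) LinearMap.id (t (d ⊗ₜ a')) := by
  simp [psiA, map_mul_assoc_symm]

/-- `ΨB b : c ⊗ d ↦ Σ τ(b⊗c)₁ ⊗ τ(b⊗c)₂·d`. -/
noncomputable def psiB (mulB : B ⊗[k] B →ₗ[k] B) (t : B ⊗[k] A →ₗ[k] A ⊗[k] B) (b : B) :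
    A ⊗[k] B →ₗ[k] A ⊗[k] B :=
  TensorProduct.map LinearMap.id mulB ∘ₗ (TensorProduct.assoc k A B B).toLinearMap
    ∘ₗ TensorProduct.map (t ∘ₗ TensorProduct.mk k B A b) LinearMap.id

@[simp] lemma psiB_tmul (t : B ⊗[k] A →ₗ[k] A ⊗[k] B) (b : B) (c : A) (d : B) :
    psiB mulB t b (c ⊗ₜ d)
      = TensorProduct.map LinearMap.id (rmul mulB d) (t (b ⊗ₜ c)) := by
  simp [psiB, map_mul_assoc]

lemma map_mulAB_sw (mulA : A ⊗[k] A →ₗ[k] A) (mulB : B ⊗[k] B →ₗ[k] B)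
    (x : A) (y : B) (w : A ⊗[k] B) :
    TensorProduct.map mulA mulB (sw x y w)
      = TensorProduct.map (lmul mulA x) (rmul mulB y) w := by
  induction w using TensorProduct.induction_on with
  | zero => simp
  | tmul r s => simp
  | add u v hu hv => simp [hu, hv]

lemma map_split_lr (f : A →ₗ[k] A) (g : B →ₗ[k] B) (z : A ⊗[k] B) :
    TensorProduct.map f g z
      = TensorProduct.map LinearMap.id g (TensorProduct.map f LinearMap.id z) := by
  induction z using TensorProduct.induction_on with
  | zero => simp
  | tmul r s => simp
  | add u v hu hv => simp [hu, hv]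

lemma map_split_rl (f : A →ₗ[k] A) (g : B →ₗ[k] B) (z : A ⊗[k] B) :
    TensorProduct.map f g z
      = TensorProduct.map f LinearMap.id (TensorProduct.map LinearMap.id g z) := by
  induction z using TensorProduct.induction_on with
  | zero => simp
  | tmul r s => simp
  | add u v hu hv => simp [hu, hv]

lemma map_comm_lr (f : A →ₗ[k] A) (g : B →ₗ[k] B) (z : A ⊗[k] B) :
    TensorProduct.map f LinearMap.id (TensorProduct.map LinearMap.id g z)
      = TensorProduct.map LinearMap.id g (TensorProduct.map f LinearMap.id z) := by
  induction z using TensorProduct.induction_on with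
  | zero => simp
  | tmul r s => simp
  | add u v hu hv => simp [hu, hv]

lemma hexA (hτ : IsTwisting k mulA unitA mulB unitB τ.toLinearMap)
    (hB1 : IsUnitalAssoc k mulB unitB) (b : B) (a a' : A) :
    τ (b ⊗ₜ mulA (a ⊗ₜ a')) = psiA mulA τ.toLinearMap a' (τ (b ⊗ₜ a)) := by
  have h := LinearMap.congr_fun hτ.2.2 ((b ⊗ₜ unitB 1) ⊗ₜ (a ⊗ₜ a'))
  simp only [LinearMap.comp_apply, map_tmul, LinearEquiv.coe_coe,
    mul_one_right hB1, midMap_apply, tau_one_left hτ, sw_tmul] at h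
  rw [h]
  have key : ∀ H : A ⊗[k] B,
      TensorProduct.map mulA mulB (midMap k τ.toLinearMap (H ⊗ₜ (a' ⊗ₜ unitB 1)))
        = psiA mulA τ.toLinearMap a' H := by
    intro H
    induction H using TensorProduct.induction_on with
    | zero => simp
    | tmul c d =>
        rw [midMap_apply, map_mulAB_sw, rmul_one hB1, psiA_tmul]
    | add u v hu hv => simp only [add_tmul, map_add, hu, hv]
  exact key _

lemma hexB (hτ : IsTwisting k mulA unitA mulB unitB τ.toLinearMap)
    (hA1 : IsUnitalAssoc k mulA unitA) (b b' : B) (a : A) :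
    τ (mulB (b ⊗ₜ b') ⊗ₜ a) = psiB mulB τ.toLinearMap b (τ (b' ⊗ₜ a)) := by
  have h := LinearMap.congr_fun hτ.2.2 ((b ⊗ₜ b') ⊗ₜ (unitA 1 ⊗ₜ a))
  simp only [LinearMap.comp_apply, map_tmul, LinearEquiv.coe_coe,
    mul_one_left hA1, midMap_apply, tau_one_right hτ, sw_tmul] at h
  rw [h]
  have key : ∀ G : A ⊗[k] B,
      TensorProduct.map mulA mulB (midMap k τ.toLinearMap ((unitA 1 ⊗ₜ b) ⊗ₜ G))
        = psiB mulB τ.toLinearMap b G := by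
    intro G
    induction G using TensorProduct.induction_on with
    | zero => simp
    | tmul c d =>
        rw [midMap_apply, map_mulAB_sw, lmul_one hA1, psiB_tmul]
    | add u v hu hv => simp only [tmul_add, map_add, hu, hv]
  exact key _

lemma tMul_tmul (a : A) (b : B) (a' : A) (b' : B) :
    tMul k mulA mulB τ.toLinearMap ((a ⊗ₜ b) ⊗ₜ (a' ⊗ₜ b'))
      = TensorProduct.map (lmul mulA a) (rmul mulB b') (τ (b ⊗ₜ a')) := by
  simp only [tMul, LinearMap.comp_apply, midMap_apply, map_mulAB_sw, LinearEquiv.coe_coe]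

lemma M3 (h : A ⊗[k] B) (a : A) (b : B) :
    tMul k mulA mulB τ.toLinearMap (h ⊗ₜ (a ⊗ₜ b))
      = TensorProduct.map LinearMap.id (rmul mulB b) (psiA mulA τ.toLinearMap a h) := by
  induction h using TensorProduct.induction_on with
  | zero => simp
  | tmul c d =>
      rw [tMul_tmul, psiA_tmul, ← map_split_lr]
      simp only [LinearEquiv.coe_coe]
  | add u v hu hv => simp only [add_tmul, map_add, hu, hv]

lemma M4 (h : A ⊗[k] B) (a : A) (b : B) :
    tMul k mulA mulB τ.toLinearMap ((a ⊗ₜ b) ⊗ₜ h)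
      = TensorProduct.map (lmul mulA a) LinearMap.id (psiB mulB τ.toLinearMap b h) := by
  induction h using TensorProduct.induction_on with
  | zero => simp
  | tmul c d =>
      rw [tMul_tmul, psiB_tmul, map_split_lr, map_comm_lr]
      simp only [LinearEquiv.coe_coe]
  | add u v hu hv => simp only [tmul_add, map_add, hu, hv]

lemma C1 (hτ : IsTwisting k mulA unitA mulB unitB τ.toLinearMap)
    (hA1 : IsUnitalAssoc k mulA unitA)
    (H : A ⊗[k] B) (b' : B) (a'' : A) :
    psiA mulA τ.toLinearMap a'' (TensorProduct.map LinearMap.id (rmul mulB b') H)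
      = tMul k mulA mulB τ.toLinearMap (H ⊗ₜ τ (b' ⊗ₜ a'')) := by
  induction H using TensorProduct.induction_on with
  | zero => simp
  | tmul c d =>
      rw [map_tmul, LinearMap.id_apply, psiA_tmul, rmul_apply]
      simp only [LinearEquiv.coe_coe]
      rw [hexB hτ hA1, M4]
  | add u v hu hv => simp only [map_add, add_tmul, hu, hv]

lemma C2 (hτ : IsTwisting k mulA unitA mulB unitB τ.toLinearMap)
    (hB1 : IsUnitalAssoc k mulB unitB)
    (G : A ⊗[k] B) (b : B) (a' : A) :
    psiB mulB τ.toLinearMap b (TensorProduct.map (lmul mulA a') LinearMap.id G)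
      = tMul k mulA mulB τ.toLinearMap (τ (b ⊗ₜ a') ⊗ₜ G) := by
  induction G using TensorProduct.induction_on with
  | zero => simp
  | tmul c d =>
      rw [map_tmul, LinearMap.id_apply, psiB_tmul, lmul_apply]
      simp only [LinearEquiv.coe_coe]
      rw [hexA hτ hB1, M3]
  | add u v hu hv => simp only [map_add, tmul_add, hu, hv]

lemma map_lcomp (f g : A →ₗ[k] A) (z : A ⊗[k] B) :
    TensorProduct.map (f ∘ₗ g) LinearMap.id z
      = TensorProduct.map f LinearMap.id (TensorProduct.map g LinearMap.id z) := by
  induction z using TensorProduct.induction_on with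
  | zero => simp
  | tmul r s => simp
  | add u v hu hv => simp [hu, hv]

lemma map_rcomp (f g : B →ₗ[k] B) (z : A ⊗[k] B) :
    TensorProduct.map LinearMap.id (f ∘ₗ g) z
      = TensorProduct.map LinearMap.id f (TensorProduct.map LinearMap.id g z) := by
  induction z using TensorProduct.induction_on with
  | zero => simp
  | tmul r s => simp
  | add u v hu hv => simp [hu, hv]

lemma psiA_map_lmul (hA1 : IsUnitalAssoc k mulA unitA) (t : B ⊗[k] A →ₗ[k] A ⊗[k] B)
    (a'' a : A) (z : A ⊗[k] B) :
    psiA mulA t a'' (TensorProduct.map (lmul mulA a) LinearMap.id z)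
      = TensorProduct.map (lmul mulA a) LinearMap.id (psiA mulA t a'' z) := by
  induction z using TensorProduct.induction_on with
  | zero => simp
  | tmul c d =>
      simp only [map_tmul, LinearMap.id_apply, psiA_tmul, lmul_apply]
      rw [lmul_mul hA1, map_lcomp]
  | add u v hu hv => simp only [map_add, hu, hv]

lemma psiB_map_rmul (hB1 : IsUnitalAssoc k mulB unitB) (t : B ⊗[k] A →ₗ[k] A ⊗[k] B)
    (b : B) (b'' : B) (z : A ⊗[k] B) :
    psiB mulB t b (TensorProduct.map LinearMap.id (rmul mulB b'') z)
      = TensorProduct.map LinearMap.id (rmul mulB b'') (psiB mulB t b z) := by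
  induction z using TensorProduct.induction_on with
  | zero => simp
  | tmul c d =>
      simp only [map_tmul, LinearMap.id_apply, psiB_tmul, rmul_apply]
      rw [rmul_mul hB1, map_rcomp]
  | add u v hu hv => simp only [map_add, hu, hv]

lemma tMul_assoc (hτ : IsTwisting k mulA unitA mulB unitB τ.toLinearMap)
    (hA1 : IsUnitalAssoc k mulA unitA) (hB1 : IsUnitalAssoc k mulB unitB) :
    tMul k mulA mulB τ.toLinearMap
        ∘ₗ TensorProduct.map LinearMap.id (tMul k mulA mulB τ.toLinearMap)
        ∘ₗ (TensorProduct.assoc k (A ⊗[k] B) (A ⊗[k] B) (A ⊗[k] B)).toLinearMap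
      = tMul k mulA mulB τ.toLinearMap
        ∘ₗ TensorProduct.map (tMul k mulA mulB τ.toLinearMap) LinearMap.id := by
  apply TensorProduct.ext_threefold
  intro x y z
  simp only [LinearMap.comp_apply, LinearEquiv.coe_coe, assoc_tmul, map_tmul,
    LinearMap.id_apply]
  induction x using TensorProduct.induction_on with
  | zero => simp
  | add u v hu hv => simp only [add_tmul, map_add, hu, hv]
  | tmul a b =>
  induction y using TensorProduct.induction_on with
  | zero => simp
  | add u v hu hv => simp only [add_tmul, tmul_add, map_add, hu, hv]
  | tmul a' b' =>
  induction z using TensorProduct.induction_on with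
  | zero => simp
  | add u v hu hv => simp only [add_tmul, tmul_add, map_add, hu, hv]
  | tmul a'' b'' =>
  rw [tMul_tmul (a := a) (b := b), tMul_tmul (a := a') (b := b')]
  rw [M3, M4]
  rw [map_split_rl (lmul mulA a) (rmul mulB b'), psiA_map_lmul hA1,
    map_split_lr (lmul mulA a') (rmul mulB b''), psiB_map_rmul hB1]
  rw [C1 hτ hA1, C2 hτ hB1]
  rw [map_comm_lr]

end Twisting
section GenMid
variable {X P Q Y R S X' Y' : Type*}
  [AddCommGroup X] [Module k X] [AddCommGroup P] [Module k P]
  [AddCommGroup Q] [Module k Q] [AddCommGroup Y] [Module k Y]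
  [AddCommGroup R] [Module k R] [AddCommGroup S] [Module k S]
  [AddCommGroup X'] [Module k X'] [AddCommGroup Y'] [Module k Y']

lemma mid_comm_last (f : Y →ₗ[k] Y') (g : P ⊗[k] Q →ₗ[k] R ⊗[k] S) :
    TensorProduct.map LinearMap.id (TensorProduct.map LinearMap.id f) ∘ₗ midMap (X := X) k g
      = midMap k g ∘ₗ TensorProduct.map LinearMap.id (TensorProduct.map LinearMap.id f) := by
  apply TensorProduct.ext_fourfold'
  intro x p q y
  simp only [LinearMap.comp_apply, midMap_apply, map_tmul, LinearMap.id_apply,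
    map_id_map_id_sw, midMap_apply]

lemma mid_comm_first (f : X →ₗ[k] X') (g : P ⊗[k] Q →ₗ[k] R ⊗[k] S) :
    TensorProduct.map (TensorProduct.map f LinearMap.id) LinearMap.id ∘ₗ midMap (Y := Y) k g
      = midMap k g ∘ₗ TensorProduct.map (TensorProduct.map f LinearMap.id) LinearMap.id := by
  apply TensorProduct.ext_fourfold'
  intro x p q y
  simp only [LinearMap.comp_apply, midMap_apply, map_tmul, LinearMap.id_apply,
    map_map_id_id_sw, midMap_apply]

lemma map_id_comp' {M N P W : Type*} [AddCommGroup M] [Module k M] [AddCommGroup N]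
    [Module k N] [AddCommGroup P] [Module k P] [AddCommGroup W] [Module k W]
    (f : M →ₗ[k] N) (g : N →ₗ[k] P) (z : W ⊗[k] M) :
    TensorProduct.map LinearMap.id (g ∘ₗ f) z
      = TensorProduct.map LinearMap.id g (TensorProduct.map LinearMap.id f z) := by
  induction z using TensorProduct.induction_on with
  | zero => simp
  | tmul r s => simp
  | add u v hu hv => simp [hu, hv]

end GenMid

section Frob
variable {mulA : A ⊗[k] A →ₗ[k] A} {unitA : k →ₗ[k] A}
variable {comulA : A →ₗ[k] A ⊗[k] A} {counitA : A →ₗ[k] k}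
variable {mulB : B ⊗[k] B →ₗ[k] B} {unitB : k →ₗ[k] B}
variable {comulB : B →ₗ[k] B ⊗[k] B} {counitB : B →ₗ[k] k}
variable {τ : B ⊗[k] A ≃ₗ[k] A ⊗[k] B}

lemma mid_inv {X Y : Type*} [AddCommGroup X] [Module k X] [AddCommGroup Y] [Module k Y] :
    midMap k τ.symm.toLinearMap ∘ₗ midMap (X := X) (Y := Y) k τ.toLinearMap
      = LinearMap.id := by
  apply TensorProduct.ext_fourfold'
  intro x p q y
  simp only [LinearMap.comp_apply, midMap_apply, midMap_sw, LinearEquiv.coe_coe,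
    LinearEquiv.symm_apply_apply, sw_tmul, LinearMap.id_apply]

lemma Kcompat (hτ : IsTwisting k mulA unitA mulB unitB τ.toLinearMap)
    (hcompat : ComulCompat k comulA comulB τ.toLinearMap) (a : A) :
    TensorProduct.map τ.toLinearMap τ.toLinearMap
        (midMap k τ.toLinearMap (comulB (unitB 1) ⊗ₜ comulA a))
      = midMap k τ.symm.toLinearMap (comulA a ⊗ₜ comulB (unitB 1)) := by
  have h := LinearMap.congr_fun hcompat (unitB 1 ⊗ₜ a)
  simp only [LinearMap.comp_apply, map_tmul, LinearEquiv.coe_coe, tau_one_left hτ,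
    LinearMap.id_apply] at h
  conv_rhs => rw [h]
  have h2 := LinearMap.congr_fun (mid_inv (τ := τ))
    (TensorProduct.map τ.toLinearMap τ.toLinearMap
      (midMap k τ.toLinearMap (comulB (unitB 1) ⊗ₜ comulA a)))
  simp only [LinearMap.comp_apply, LinearMap.id_apply] at h2
  exact h2.symm

lemma Kcompat' (hτ : IsTwisting k mulA unitA mulB unitB τ.toLinearMap)
    (hcompat : ComulCompat k comulA comulB τ.toLinearMap) (b : B) :
    TensorProduct.map τ.toLinearMap τ.toLinearMap
        (midMap k τ.toLinearMap (comulB b ⊗ₜ comulA (unitA 1)))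
      = midMap k τ.symm.toLinearMap (comulA (unitA 1) ⊗ₜ comulB b) := by
  have h := LinearMap.congr_fun hcompat (b ⊗ₜ unitA 1)
  simp only [LinearMap.comp_apply, map_tmul, LinearEquiv.coe_coe, tau_one_right hτ,
    LinearMap.id_apply] at h
  conv_rhs => rw [h]
  have h2 := LinearMap.congr_fun (mid_inv (τ := τ))
    (TensorProduct.map τ.toLinearMap τ.toLinearMap
      (midMap k τ.toLinearMap (comulB b ⊗ₜ comulA (unitA 1))))
  simp only [LinearMap.comp_apply, LinearMap.id_apply] at h2
  exact h2.symm

lemma M5 (hτ : IsTwisting k mulA unitA mulB unitB τ.toLinearMap)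
    (hB1 : IsUnitalAssoc k mulB unitB) (w : B ⊗[k] A) (a : A) (b : B) :
    tMul k mulA mulB τ.toLinearMap (τ.toLinearMap w ⊗ₜ (a ⊗ₜ b))
      = TensorProduct.map LinearMap.id (rmul mulB b)
          (τ.toLinearMap (TensorProduct.map LinearMap.id (rmul mulA a) w)) := by
  induction w using TensorProduct.induction_on with
  | zero => simp
  | tmul s t =>
      rw [M3]
      simp only [LinearEquiv.coe_coe, map_tmul, LinearMap.id_apply, rmul_apply]
      rw [← hexA hτ hB1]
  | add u v hu hv => simp only [map_add, add_tmul, hu, hv]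

lemma M5' (hτ : IsTwisting k mulA unitA mulB unitB τ.toLinearMap)
    (hA1 : IsUnitalAssoc k mulA unitA) (w : B ⊗[k] A) (a : A) (b : B) :
    tMul k mulA mulB τ.toLinearMap ((a ⊗ₜ b) ⊗ₜ τ.toLinearMap w)
      = TensorProduct.map (lmul mulA a) LinearMap.id
          (τ.toLinearMap (TensorProduct.map (lmul mulB b) LinearMap.id w)) := by
  induction w using TensorProduct.induction_on with
  | zero => simp
  | tmul s t =>
      rw [M4]
      simp only [LinearEquiv.coe_coe, map_tmul, LinearMap.id_apply, lmul_apply]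
      rw [← hexB hτ hA1]
  | add u v hu hv => simp only [map_add, tmul_add, hu, hv]

lemma S7 (hτ : IsTwisting k mulA unitA mulB unitB τ.toLinearMap)
    (hB1 : IsUnitalAssoc k mulB unitB)
    (W : (B ⊗[k] A) ⊗[k] (B ⊗[k] A)) (a : A) (b : B) :
    TensorProduct.map LinearMap.id (tMul k mulA mulB τ.toLinearMap)
        ((TensorProduct.assoc k (A ⊗[k] B) (A ⊗[k] B) (A ⊗[k] B))
          ((TensorProduct.map τ.toLinearMap τ.toLinearMap W) ⊗ₜ (a ⊗ₜ b)))
      = TensorProduct.map LinearMap.id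
          (TensorProduct.map LinearMap.id (rmul mulB b))
          (TensorProduct.map τ.toLinearMap τ.toLinearMap
            (TensorProduct.map LinearMap.id
              (TensorProduct.map LinearMap.id (rmul mulA a)) W)) := by
  induction W using TensorProduct.induction_on with
  | zero => simp
  | tmul w w' =>
      simp only [map_tmul, LinearMap.id_apply, assoc_tmul]
      rw [M5 hτ hB1]
  | add u v hu hv => simp only [map_add, add_tmul, hu, hv]

lemma S7' (hτ : IsTwisting k mulA unitA mulB unitB τ.toLinearMap)
    (hA1 : IsUnitalAssoc k mulA unitA)
    (W : (B ⊗[k] A) ⊗[k] (B ⊗[k] A)) (a : A) (b : B) :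
    TensorProduct.map (tMul k mulA mulB τ.toLinearMap) LinearMap.id
        ((TensorProduct.assoc k (A ⊗[k] B) (A ⊗[k] B) (A ⊗[k] B)).symm
          ((a ⊗ₜ b) ⊗ₜ (TensorProduct.map τ.toLinearMap τ.toLinearMap W)))
      = TensorProduct.map
          (TensorProduct.map (lmul mulA a) LinearMap.id) LinearMap.id
          (TensorProduct.map τ.toLinearMap τ.toLinearMap
            (TensorProduct.map
              (TensorProduct.map (lmul mulB b) LinearMap.id) LinearMap.id W)) := by
  induction W using TensorProduct.induction_on with
  | zero => simp
  | tmul w w' =>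
      simp only [map_tmul, LinearMap.id_apply, assoc_symm_tmul]
      rw [M5' hτ hA1]
  | add u v hu hv => simp only [map_add, tmul_add, hu, hv]

lemma L3u (hA : IsFrobenius k mulA unitA comulA counitA)
    (hB : IsFrobenius k mulB unitB comulB counitB)
    (hτ : IsTwisting k mulA unitA mulB unitB τ.toLinearMap)
    (hcompat : ComulCompat k comulA comulB τ.toLinearMap) (a : A) (b : B) :
    TensorProduct.map LinearMap.id (tMul k mulA mulB τ.toLinearMap)
        ((TensorProduct.assoc k (A ⊗[k] B) (A ⊗[k] B) (A ⊗[k] B))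
          ((midMap k τ.symm.toLinearMap (comulA (unitA 1) ⊗ₜ comulB (unitB 1)))
            ⊗ₜ (a ⊗ₜ b)))
      = midMap k τ.symm.toLinearMap (comulA a ⊗ₜ comulB b) := by
  rw [← Kcompat hτ hcompat (unitA 1)]
  rw [S7 hτ hB.1]
  have h3 := LinearMap.congr_fun (mid_comm_last (rmul mulA a) τ.toLinearMap)
    (comulB (unitB 1) ⊗ₜ comulA (unitA 1))
  simp only [LinearMap.comp_apply] at h3
  rw [h3, map_tmul, LinearMap.id_apply, ← cas_left hA a, Kcompat hτ hcompat a]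
  have h4 := LinearMap.congr_fun (mid_comm_last (rmul mulB b) τ.symm.toLinearMap)
    (comulA a ⊗ₜ comulB (unitB 1))
  simp only [LinearMap.comp_apply] at h4
  rw [h4, map_tmul, LinearMap.id_apply, ← cas_left hB b]

lemma L3u' (hA : IsFrobenius k mulA unitA comulA counitA)
    (hB : IsFrobenius k mulB unitB comulB counitB)
    (hτ : IsTwisting k mulA unitA mulB unitB τ.toLinearMap)
    (hcompat : ComulCompat k comulA comulB τ.toLinearMap) (a : A) (b : B) :
    TensorProduct.map (tMul k mulA mulB τ.toLinearMap) LinearMap.id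
        ((TensorProduct.assoc k (A ⊗[k] B) (A ⊗[k] B) (A ⊗[k] B)).symm
          ((a ⊗ₜ b) ⊗ₜ
            (midMap k τ.symm.toLinearMap (comulA (unitA 1) ⊗ₜ comulB (unitB 1)))))
      = midMap k τ.symm.toLinearMap (comulA a ⊗ₜ comulB b) := by
  rw [← Kcompat hτ hcompat (unitA 1)]
  rw [S7' hτ hA.1]
  have h3 := LinearMap.congr_fun (mid_comm_first (lmul mulB b) τ.toLinearMap)
    (comulB (unitB 1) ⊗ₜ comulA (unitA 1))
  simp only [LinearMap.comp_apply] at h3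
  rw [h3, map_tmul, LinearMap.id_apply, ← cas_right hB b, Kcompat' hτ hcompat b]
  have h4 := LinearMap.congr_fun (mid_comm_first (lmul mulA a) τ.symm.toLinearMap)
    (comulA (unitA 1) ⊗ₜ comulB b)
  simp only [LinearMap.comp_apply] at h4
  rw [h4, map_tmul, LinearMap.id_apply, ← cas_right hA a]

end Frob
section Final
variable {mulA : A ⊗[k] A →ₗ[k] A} {unitA : k →ₗ[k] A}
variable {comulA : A →ₗ[k] A ⊗[k] A} {counitA : A →ₗ[k] k}
variable {mulB : B ⊗[k] B →ₗ[k] B} {unitB : k →ₗ[k] B}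
variable {comulB : B →ₗ[k] B ⊗[k] B} {counitB : B →ₗ[k] k}
variable {τ : B ⊗[k] A ≃ₗ[k] A ⊗[k] B}

/-- Contract the `A`-leg of `B ⊗ A` with the counit. -/
noncomputable def ctrA (counitA : A →ₗ[k] k) : B ⊗[k] A →ₗ[k] B :=
  (TensorProduct.lid k B).toLinearMap ∘ₗ TensorProduct.map counitA LinearMap.id
    ∘ₗ (TensorProduct.comm k B A).toLinearMap

@[simp] lemma ctrA_tmul (r : B) (s : A) :
    ctrA (B := B) counitA (r ⊗ₜ s) = counitA s • r := by
  simp [ctrA]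

lemma CT (x : A) (y : B) (z : B ⊗[k] A) :
    (TensorProduct.rid k (A ⊗[k] B))
        ((TensorProduct.map LinearMap.id (tCounit k counitA counitB)) (sw x y z))
      = counitB y • (x ⊗ₜ ctrA counitA z) := by
  induction z using TensorProduct.induction_on with
  | zero => simp
  | tmul r s =>
      simp only [sw_tmul, map_tmul, LinearMap.id_apply, ctrA_tmul, tCounit,
        LinearMap.comp_apply, LinearEquiv.coe_coe, lid_tmul, rid_tmul, smul_eq_mul,
        tmul_smul]
      rw [smul_smul, mul_comm]
  | add u v hu hv => simp only [map_add, tmul_add, smul_add, hu, hv]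

/-- `(u₁⊗u₂)⊗v₁ ↦ u₁ ⊗ ctrA(τ⁻¹(u₂ ⊗ v₁))`. -/
noncomputable def ctr2 (counitA : A →ₗ[k] k) (τ : B ⊗[k] A ≃ₗ[k] A ⊗[k] B) :
    (A ⊗[k] A) ⊗[k] B →ₗ[k] A ⊗[k] B :=
  TensorProduct.map LinearMap.id (ctrA counitA ∘ₗ τ.symm.toLinearMap)
    ∘ₗ (TensorProduct.assoc k A A B).toLinearMap

@[simp] lemma ctr2_tmul (u1 u2 : A) (v1 : B) :
    ctr2 counitA τ ((u1 ⊗ₜ u2) ⊗ₜ v1) = u1 ⊗ₜ ctrA counitA (τ.symm (u2 ⊗ₜ v1)) := by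
  simp [ctr2]

lemma claim1 (u : A ⊗[k] A) (v : B ⊗[k] B) :
    (TensorProduct.rid k (A ⊗[k] B))
        ((TensorProduct.map LinearMap.id (tCounit k counitA counitB))
          (midMap k τ.symm.toLinearMap (u ⊗ₜ v)))
      = ctr2 counitA τ
          ((TensorProduct.map LinearMap.id
            ((TensorProduct.rid k B).toLinearMap ∘ₗ TensorProduct.map LinearMap.id counitB))
              (u ⊗ₜ v)) := by
  induction u using TensorProduct.induction_on with
  | zero => simp
  | add p q hp hq => simp only [add_tmul, map_add, hp, hq]
  | tmul u1 u2 =>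
  induction v using TensorProduct.induction_on with
  | zero => simp
  | add p q hp hq => simp only [tmul_add, map_add, hp, hq]
  | tmul v1 v2 =>
  rw [midMap_apply, CT]
  simp only [map_tmul, LinearMap.id_apply, LinearMap.comp_apply, LinearEquiv.coe_coe,
    rid_tmul, tmul_smul, map_smul, ctr2_tmul]

lemma claim3 (hτ : IsTwisting k mulA unitA mulB unitB τ.toLinearMap) (u : A ⊗[k] A) :
    ctr2 counitA τ (u ⊗ₜ unitB 1)
      = TensorProduct.map LinearMap.id (unitB ∘ₗ counitA) u := by
  induction u using TensorProduct.induction_on with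
  | zero => simp
  | tmul u1 u2 =>
      rw [ctr2_tmul, tau_symm_one_left hτ, ctrA_tmul, map_tmul]
      simp only [LinearMap.id_apply, LinearMap.comp_apply]
      have : unitB (counitA u2) = counitA u2 • unitB 1 := by
        rw [← map_smul, smul_eq_mul, mul_one]
      rw [this, tmul_smul]
  | add p q hp hq => simp only [add_tmul, map_add, hp, hq]

lemma RID1 (u : A ⊗[k] A) :
    TensorProduct.map LinearMap.id (unitB ∘ₗ counitA) u
      = ((TensorProduct.rid k A) ((TensorProduct.map LinearMap.id counitA) u)) ⊗ₜ unitB 1 := by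
  induction u using TensorProduct.induction_on with
  | zero => simp
  | tmul u1 u2 =>
      simp only [map_tmul, LinearMap.id_apply, LinearMap.comp_apply, rid_tmul]
      have : unitB (counitA u2) = counitA u2 • unitB 1 := by
        rw [← map_smul, smul_eq_mul, mul_one]
      simp [this, smul_tmul']
  | add p q hp hq => simp only [map_add, add_tmul, hp, hq]

lemma L5 (hA : IsFrobenius k mulA unitA comulA counitA)
    (hB : IsFrobenius k mulB unitB comulB counitB)
    (hτ : IsTwisting k mulA unitA mulB unitB τ.toLinearMap) :
    (TensorProduct.rid k (A ⊗[k] B))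
        ((TensorProduct.map LinearMap.id (tCounit k counitA counitB))
          (midMap k τ.symm.toLinearMap (comulA (unitA 1) ⊗ₜ comulB (unitB 1))))
      = unitA 1 ⊗ₜ unitB 1 := by
  rw [claim1, map_tmul, LinearMap.id_apply, LinearMap.comp_apply,
    LinearEquiv.coe_toLinearMap]
  rw [counit_right hB.2.1, claim3 hτ, RID1, counit_right hA.2.1]

lemma S5 (x : A ⊗[k] B) (E : (A ⊗[k] B) ⊗[k] (A ⊗[k] B)) :
    (TensorProduct.rid k (A ⊗[k] B))
        ((TensorProduct.map LinearMap.id (tCounit k counitA counitB))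
          ((TensorProduct.map (tMul k mulA mulB τ.toLinearMap) LinearMap.id)
            ((TensorProduct.assoc k (A ⊗[k] B) (A ⊗[k] B) (A ⊗[k] B)).symm (x ⊗ₜ E))))
      = tMul k mulA mulB τ.toLinearMap
          (x ⊗ₜ ((TensorProduct.rid k (A ⊗[k] B))
            ((TensorProduct.map LinearMap.id (tCounit k counitA counitB)) E))) := by
  induction E using TensorProduct.induction_on with
  | zero => simp
  | tmul E1 E2 =>
      simp only [assoc_symm_tmul, map_tmul, LinearMap.id_apply, rid_tmul, tmul_smul,
        map_smul]
  | add p q hp hq => simp only [tmul_add, map_add, hp, hq]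

lemma M2 (hτ : IsTwisting k mulA unitA mulB unitB τ.toLinearMap)
    (hA1 : IsUnitalAssoc k mulA unitA) (hB1 : IsUnitalAssoc k mulB unitB)
    (x : A ⊗[k] B) :
    tMul k mulA mulB τ.toLinearMap (x ⊗ₜ (unitA 1 ⊗ₜ unitB 1)) = x := by
  induction x using TensorProduct.induction_on with
  | zero => simp
  | tmul a b =>
      rw [tMul_tmul, tau_one_right hτ, map_tmul]
      simp [mul_one_right hA1, mul_one_right hB1]
  | add p q hp hq => simp only [add_tmul, map_add, hp, hq]

lemma beta_factor :
    (TensorProduct.lid k k).toLinearMap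
        ∘ₗ TensorProduct.map (counitA ∘ₗ mulA) (counitB ∘ₗ mulB)
        ∘ₗ midMap k τ.toLinearMap
      = tCounit k counitA counitB ∘ₗ tMul k mulA mulB τ.toLinearMap := by
  unfold tCounit tMul
  rw [TensorProduct.map_comp]
  rfl

lemma L3map (hA : IsFrobenius k mulA unitA comulA counitA)
    (hB : IsFrobenius k mulB unitB comulB counitB)
    (hτ : IsTwisting k mulA unitA mulB unitB τ.toLinearMap)
    (hcompat : ComulCompat k comulA comulB τ.toLinearMap) :
    TensorProduct.map LinearMap.id (tMul k mulA mulB τ.toLinearMap)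
        ∘ₗ (TensorProduct.assoc k (A ⊗[k] B) (A ⊗[k] B) (A ⊗[k] B)).toLinearMap
        ∘ₗ TensorProduct.mk k ((A ⊗[k] B) ⊗[k] (A ⊗[k] B)) (A ⊗[k] B)
            (midMap k τ.symm.toLinearMap (comulA (unitA 1) ⊗ₜ comulB (unitB 1)))
      = midMap k τ.symm.toLinearMap ∘ₗ TensorProduct.map comulA comulB := by
  apply TensorProduct.ext'
  intro a b
  simp only [LinearMap.comp_apply, mk_apply, LinearEquiv.coe_coe, map_tmul]
  exact L3u hA hB hτ hcompat a b

lemma L3map' (hA : IsFrobenius k mulA unitA comulA counitA)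
    (hB : IsFrobenius k mulB unitB comulB counitB)
    (hτ : IsTwisting k mulA unitA mulB unitB τ.toLinearMap)
    (hcompat : ComulCompat k comulA comulB τ.toLinearMap) :
    TensorProduct.map (tMul k mulA mulB τ.toLinearMap) LinearMap.id
        ∘ₗ (TensorProduct.assoc k (A ⊗[k] B) (A ⊗[k] B) (A ⊗[k] B)).symm.toLinearMap
        ∘ₗ (TensorProduct.mk k (A ⊗[k] B) ((A ⊗[k] B) ⊗[k] (A ⊗[k] B))).flip
            (midMap k τ.symm.toLinearMap (comulA (unitA 1) ⊗ₜ comulB (unitB 1)))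
      = midMap k τ.symm.toLinearMap ∘ₗ TensorProduct.map comulA comulB := by
  apply TensorProduct.ext'
  intro a b
  simp only [LinearMap.comp_apply, LinearMap.flip_apply, mk_apply, LinearEquiv.coe_coe,
    map_tmul]
  exact L3u' hA hB hτ hcompat a b

end Final
end TTPAux

open TTP in
/-- Proposition 5.6 of the paper: the induced pairing
`β = (β_A⊗β_B)∘(1⊗τ⊗1)` and co-pairing `α = (1⊗τ⁻¹⊗1)∘(α_A⊗α_B)` of the
twisted tensor product of Frobenius algebras are an associative non-degenerate
pairing and a corresponding co-pairing. -/
theorem twistedTensorProduct_pairing_copairing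
    {k A B : Type*} [Field k]
    [AddCommGroup A] [Module k A] [AddCommGroup B] [Module k B]
    (mulA : A ⊗[k] A →ₗ[k] A) (unitA : k →ₗ[k] A)
    (comulA : A →ₗ[k] A ⊗[k] A) (counitA : A →ₗ[k] k)
    (mulB : B ⊗[k] B →ₗ[k] B) (unitB : k →ₗ[k] B)
    (comulB : B →ₗ[k] B ⊗[k] B) (counitB : B →ₗ[k] k)
    (hA : IsFrobenius k mulA unitA comulA counitA)
    (hB : IsFrobenius k mulB unitB comulB counitB)
    (τ : B ⊗[k] A ≃ₗ[k] A ⊗[k] B)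
    (hτ : IsTwisting k mulA unitA mulB unitB τ.toLinearMap)
    (hcompat : ComulCompat k comulA comulB τ.toLinearMap) :
    PairingAssoc k (tMul k mulA mulB τ.toLinearMap)
      ((TensorProduct.lid k k).toLinearMap
        ∘ₗ TensorProduct.map (counitA ∘ₗ mulA) (counitB ∘ₗ mulB)
        ∘ₗ midMap k τ.toLinearMap)
    ∧ PairingNondeg k
      ((TensorProduct.lid k k).toLinearMap
        ∘ₗ TensorProduct.map (counitA ∘ₗ mulA) (counitB ∘ₗ mulB)
        ∘ₗ midMap k τ.toLinearMap)
      (midMap k τ.symm.toLinearMap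
        ∘ₗ TensorProduct.map (comulA ∘ₗ unitA) (comulB ∘ₗ unitB)
        ∘ₗ (TensorProduct.lid k k).symm.toLinearMap) := by
  constructor
  · unfold PairingAssoc
    rw [TTPAux.beta_factor]
    have hm := TTPAux.tMul_assoc (τ := τ) hτ hA.1 hB.1
    apply LinearMap.ext; intro z
    have h := LinearMap.congr_fun hm z
    simp only [LinearMap.comp_apply] at h ⊢
    rw [h]
  · unfold PairingNondeg
    rw [TTPAux.beta_factor]
    apply LinearMap.ext
    intro x
    simp only [LinearMap.comp_apply, LinearEquiv.coe_coe, TensorProduct.lid_symm_apply,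
      TensorProduct.map_tmul, LinearMap.id_apply]
    rw [TTPAux.map_id_comp']
    have h1 := LinearMap.congr_fun (TTPAux.L3map hA hB hτ hcompat) x
    simp only [LinearMap.comp_apply, TensorProduct.mk_apply, LinearEquiv.coe_coe] at h1
    rw [h1]
    have h2 := LinearMap.congr_fun (TTPAux.L3map' hA hB hτ hcompat) x
    simp only [LinearMap.comp_apply, LinearMap.flip_apply, TensorProduct.mk_apply,
      LinearEquiv.coe_coe] at h2
    rw [← h2]
    rw [TTPAux.S5, TTPAux.L5 hA hB hτ, TTPAux.M2 hτ hA.1 hB.1]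
end

section
/- Let n ≥ 2, m = (m_1,…,m_n) ∈ ℕ^n with every m_i ≥ 2, and q = (q_{ij}) ∈ M_n(k^×) with q_{ii} = 1 and q_{ij}q_{ji} = 1 for all 1 ≤ i,j ≤ n. If for all i,j the scalar q_{ij} is a root of unity whose order divides gcd(m_i − 1, m_j − 1), then the quantum complete intersection Λ^n_{q,m} is a symmetric Frobenius algebra; explicitly, the pairing β given on monomials by β(x_1^{a_1}⋯x_n^{a_n} ⊗ x_1^{b_1}⋯x_n^{b_n}) = (∏_{j=2}^{n} ∏_{i=1}^{j−1} q_{ji}^{a_i b_j}) · ∏_{l=1}^{n} δ_{a_l+b_l, m_l−1} is an associative non-degenerate pairing satisfying β∘σ = β, where σ is the flip. -/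
open scoped TensorProduct

namespace TTP

/-- The defining relations of the quantum complete intersection:
`x_i^{m_i} = 0` and `x_i x_j = q_{ij} x_j x_i`. -/
inductive QCIRel (k : Type*) [Field k] (n : ℕ) (q : Fin n → Fin n → kˣ) (m : Fin n → ℕ) :
    FreeAlgebra k (Fin n) → FreeAlgebra k (Fin n) → Prop
  | pow (i : Fin n) : QCIRel k n q m (FreeAlgebra.ι k i ^ m i) 0
  | swap (i j : Fin n) :
      QCIRel k n q m (FreeAlgebra.ι k i * FreeAlgebra.ι k j)
        ((q i j : k) • (FreeAlgebra.ι k j * FreeAlgebra.ι k i))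

/-- The quantum complete intersection `Λ^n_{q,m}`. -/
abbrev QCI (k : Type*) [Field k] (n : ℕ) (q : Fin n → Fin n → kˣ) (m : Fin n → ℕ) :=
  RingQuot (QCIRel k n q m)

/-- The generator `x_i` of the quantum complete intersection. -/
noncomputable def qciX (k : Type*) [Field k] (n : ℕ) (q : Fin n → Fin n → kˣ)
    (m : Fin n → ℕ) (i : Fin n) : QCI k n q m :=
  RingQuot.mkAlgHom k (QCIRel k n q m) (FreeAlgebra.ι k i)

/-- The ordered monomial `x_1^{a_1} ⋯ x_n^{a_n}` in the quantum complete
intersection. -/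
noncomputable def qciMonomial (k : Type*) [Field k] (n : ℕ) (q : Fin n → Fin n → kˣ)
    (m : Fin n → ℕ) (a : Fin n → ℕ) : QCI k n q m :=
  ((List.finRange n).map fun i => qciX k n q m i ^ a i).prod

end TTP

/-!
The standard monomials `x^a`, `0 ≤ a < m`, form a basis of `Λ = Λ^n_{q,m}`: they span because
the commutation relations let one reorder any word, and they are independent because `Λ` acts
on the vector space with basis indexed by these exponents through twisted shift operators.
The pairing is `β(u ⊗ v) = ε(uv)` for the functional `ε` taking the coefficient of the top
monomial `x^(m-1)`, so associativity of `β` is that of the multiplication. Since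
`x^b x^a = c(a,b) x^(a+b)` with `c(a,b) = ∏_{i<j} q_{ji}^{a_i b_j}`, the root-of-unity condition
gives `c(a,b) = c(b,a)` whenever `a + b = m - 1`, so `ε` is a trace and `β` is symmetric; and
`x^a` pairs nontrivially only with `x^(m-1-a)`, which yields the dual basis.
-/

namespace TTP

variable {k : Type*} [Field k]

theorem pow_mul_eq_pow_mul_of_add_eq {G : Type*} [Monoid G] [IsRightCancelMul G] {x : G}
    {a b c d r s : ℕ} (hr : x ^ r = 1) (hs : x ^ s = 1) (hab : a + b = r) (hcd : c + d = s) :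
    x ^ (a * d) = x ^ (b * c) :=
  mul_right_cancel (b := x ^ (a * c)) <| by
    rw [← pow_add, ← pow_add, ← mul_add, ← add_mul, add_comm d, hcd, add_comm b, hab, pow_mul',
      hs, pow_mul, hr, one_pow, one_pow]

theorem pairingAssoc_comp_mul' {A : Type*} [Ring A] [Algebra k A] (ε : A →ₗ[k] k) :
    PairingAssoc k (LinearMap.mul' k A) (ε ∘ₗ LinearMap.mul' k A) :=
  TensorProduct.ext_threefold fun u v w => by simp [mul_assoc]

theorem pairingSymm_comp_mul' {A : Type*} [Ring A] [Algebra k A] {ε : A →ₗ[k] k}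
    (h : ∀ u v, ε (u * v) = ε (v * u)) : PairingSymm k (ε ∘ₗ LinearMap.mul' k A) :=
  TensorProduct.ext' fun u v => by simp [h v u]

theorem pairingNondeg_toSpanSingleton_sum {A ι κ : Type*} [AddCommGroup A] [Module k A]
    (β : A ⊗[k] A →ₗ[k] k) (s : Finset ι) (x y : ι → A) {v : κ → A}
    (hv : Submodule.span k (Set.range v) = ⊤)
    (h : ∀ c, ∑ a ∈ s, β (y a ⊗ₜ[k] v c) • x a = v c) :
    PairingNondeg k β (LinearMap.toSpanSingleton k _ (∑ a ∈ s, x a ⊗ₜ[k] y a)) := by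
  refine LinearMap.ext_on_range hv fun c => ?_
  simp [TensorProduct.sum_tmul, h c]

variable {n : ℕ} (q : Fin n → Fin n → kˣ) (m : Fin n → ℕ)

local notation "X" => qciX k n q m
local notation "M" => qciMonomial k n q m

theorem qciX_pow_eq_zero (i : Fin n) : X i ^ m i = 0 := by
  simpa [qciX] using RingQuot.mkAlgHom_rel k (QCIRel.pow (q := q) (m := m) i)

theorem qciX_mul_qciX (i j : Fin n) : X i * X j = (q i j : k) • (X j * X i) := by
  simpa [qciX] using RingQuot.mkAlgHom_rel k (QCIRel.swap (q := q) (m := m) i j)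

theorem qciX_mul_qciX_pow (i j : Fin n) (s : ℕ) :
    X i * X j ^ s = ((q i j : k) ^ s) • (X j ^ s * X i) := by
  induction s with
  | zero => simp
  | succ s ih =>
    rw [pow_succ, ← mul_assoc, ih, smul_mul_assoc, mul_assoc, qciX_mul_qciX, mul_smul_comm,
      smul_smul, ← pow_succ, ← mul_assoc, ← pow_succ]

theorem exists_qciX_mul_prod_eq_smul (i : Fin n) (c : Fin n → ℕ) (l : List (Fin n))
    (hl : l.Nodup) (hi : i ∈ l) :
    ∃ r : k, X i * (l.map fun j => X j ^ c j).prod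
      = r • (l.map fun j => X j ^ (c + Pi.single i 1 : Fin n → ℕ) j).prod := by
  induction l with
  | nil => simp at hi
  | cons j l ih =>
    obtain ⟨hjl, hl⟩ := List.nodup_cons.1 hl
    simp only [List.map_cons, List.prod_cons]
    by_cases hji : j = i
    · subst hji
      have hrest : (l.map fun j' => X j' ^ (c + Pi.single j 1 : Fin n → ℕ) j')
          = l.map fun j' => X j' ^ c j' :=
        List.map_congr_left fun j' hj' => by
          rw [Pi.add_apply, Pi.single_eq_of_ne (ne_of_mem_of_not_mem hj' hjl), add_zero]
      refine ⟨1, ?_⟩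
      rw [hrest, one_smul, ← mul_assoc, ← pow_succ', Pi.add_apply, Pi.single_eq_same]
    · obtain ⟨r, hr⟩ := ih hl ((List.mem_cons.1 hi).resolve_left (Ne.symm hji))
      refine ⟨(q i j : k) ^ c j * r, ?_⟩
      rw [← mul_assoc, qciX_mul_qciX_pow, smul_mul_assoc, mul_assoc, hr, mul_smul_comm, smul_smul,
        Pi.add_apply, Pi.single_eq_of_ne hji, add_zero]

theorem exists_qciX_mul_qciMonomial (i : Fin n) (c : Fin n → ℕ) :
    ∃ r : k, X i * M c = r • M (c + Pi.single i 1) :=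
  exists_qciX_mul_prod_eq_smul q m i c _ (List.nodup_finRange n) (List.mem_finRange i)

theorem qciMonomial_zero : M 0 = 1 := by
  simp [qciMonomial]

theorem qciMonomial_eq_zero {c : Fin n → ℕ} {i : Fin n} (h : m i ≤ c i) : M c = 0 :=
  List.prod_eq_zero <| List.mem_map.2
    ⟨i, List.mem_finRange i, pow_eq_zero_of_le h (qciX_pow_eq_zero q m i)⟩

theorem mul_mem_span_qciMonomial (u : QCI k n q m) {v : QCI k n q m}
    (hv : v ∈ Submodule.span k (Set.range M)) : u * v ∈ Submodule.span k (Set.range M) := by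
  obtain ⟨w, rfl⟩ := RingQuot.mkAlgHom_surjective k (QCIRel k n q m) u
  induction w using FreeAlgebra.induction generalizing v with
  | grade0 r =>
    rw [AlgHom.commutes, Algebra.algebraMap_eq_smul_one, smul_one_mul]
    exact Submodule.smul_mem _ r hv
  | grade1 i =>
    refine Submodule.span_le (p := (Submodule.span k (Set.range M)).comap
      (LinearMap.mulLeft k (X i))).2 ?_ hv
    rintro _ ⟨c, rfl⟩
    obtain ⟨r, hr⟩ := exists_qciX_mul_qciMonomial q m i c
    simpa [hr] using Submodule.smul_mem _ r (Submodule.subset_span (Set.mem_range_self _))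
  | mul a b ha hb => rw [map_mul, mul_assoc]; exact ha (hb hv)
  | add a b ha hb => rw [map_add, add_mul]; exact Submodule.add_mem _ (ha hv) (hb hv)

theorem span_range_qciMonomial : Submodule.span k (Set.range M) = ⊤ :=
  eq_top_iff.2 fun u _ => by
    simpa using mul_mem_span_qciMonomial q m u (Submodule.subset_span ⟨0, qciMonomial_zero q m⟩)

section ShiftOperators

abbrev ExpBox (m : Fin n → ℕ) : Type := {a : Fin n → ℕ // ∀ i, a i < m i}

variable {m}

noncomputable def boxVec (c : Fin n → ℕ) : ExpBox m →₀ k :=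
  if h : ∀ i, c i < m i then Finsupp.single ⟨c, h⟩ 1 else 0

theorem boxVec_val (a : ExpBox m) : boxVec a.1 = (Finsupp.single a 1 : ExpBox m →₀ k) :=
  dif_pos a.2

theorem boxVec_eq_zero {c : Fin n → ℕ} {i : Fin n} (h : m i ≤ c i) :
    (boxVec c : ExpBox m →₀ k) = 0 :=
  dif_neg fun hc => (hc i).not_ge h

noncomputable def shiftCoeff (j : Fin n) (c : Fin n → ℕ) : k :=
  ∏ i ∈ Finset.Iio j, (q j i : k) ^ c i

theorem shiftCoeff_add (j : Fin n) (c d : Fin n → ℕ) :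
    shiftCoeff q j (c + d) = shiftCoeff q j c * shiftCoeff q j d := by
  simp [shiftCoeff, pow_add, Finset.prod_mul_distrib]

theorem shiftCoeff_single (j i : Fin n) (t : ℕ) :
    shiftCoeff q j (Pi.single i t) = if i < j then (q j i : k) ^ t else 1 := by
  simp [shiftCoeff, Pi.single_apply, pow_ite, Finset.prod_ite_eq']

variable (m)

/-- Left multiplication by `x_j` in the monomial basis. -/
noncomputable def shiftOp (j : Fin n) : Module.End k (ExpBox m →₀ k) :=
  Finsupp.linearCombination k fun a => shiftCoeff q j a.1 • boxVec (a.1 + Pi.single j 1)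

theorem shiftOp_boxVec (j : Fin n) (c : Fin n → ℕ) :
    shiftOp q m j (boxVec c) = shiftCoeff q j c • boxVec (c + Pi.single j 1) := by
  by_cases hc : ∀ i, c i < m i
  · rw [boxVec, dif_pos hc, shiftOp, Finsupp.linearCombination_single, one_smul]
  · obtain ⟨i, hi⟩ := not_forall.1 hc
    rw [boxVec, dif_neg hc, map_zero, boxVec_eq_zero (i := i) (by simp at hi ⊢; omega), smul_zero]

theorem shiftOp_pow_boxVec (j : Fin n) (t : ℕ) (c : Fin n → ℕ) :
    (shiftOp q m j ^ t) (boxVec c) = shiftCoeff q j c ^ t • boxVec (c + Pi.single j t) := by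
  induction t with
  | zero => simp
  | succ t ih =>
    rw [pow_succ', Module.End.mul_apply, ih, map_smul, shiftOp_boxVec, shiftCoeff_add,
      shiftCoeff_single, if_neg (lt_irrefl j), mul_one, smul_smul, ← pow_succ, add_assoc,
      ← Pi.single_add]

theorem shiftOp_pow_eq_zero (j : Fin n) : shiftOp q m j ^ m j = 0 := by
  refine Finsupp.lhom_ext' fun a => LinearMap.ext_ring ?_
  rw [LinearMap.comp_apply, Finsupp.lsingle_apply, ← boxVec_val, shiftOp_pow_boxVec,
    boxVec_eq_zero (i := j) (by simp), smul_zero, LinearMap.zero_comp, LinearMap.zero_apply]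

theorem shiftOp_mul_shiftOp (hqdiag : ∀ i, q i i = 1) (hqinv : ∀ i j, q i j * q j i = 1)
    (i j : Fin n) :
    shiftOp q m i * shiftOp q m j = (q i j : k) • (shiftOp q m j * shiftOp q m i) := by
  refine Finsupp.lhom_ext' fun a => LinearMap.ext_ring ?_
  have htwist : (if j < i then (q i j : k) else 1) = q i j * if i < j then (q j i : k) else 1 := by
    rcases lt_trichotomy i j with h | rfl | h
    · simp [h, h.not_gt, ← Units.val_mul, hqinv]
    · simp [hqdiag]
    · simp [h, h.not_gt]
  simp only [LinearMap.comp_apply, Finsupp.lsingle_apply, ← boxVec_val, LinearMap.smul_apply,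
    Module.End.mul_apply, shiftOp_boxVec, map_smul, shiftCoeff_add, shiftCoeff_single, pow_one,
    htwist, smul_smul, add_right_comm _ (Pi.single i 1)]
  ring_nf

theorem list_prod_shiftOp_pow_boxVec (a c : Fin n → ℕ) (l : List (Fin n))
    (hl : l.Pairwise (· < ·)) :
    (l.map fun j => shiftOp q m j ^ a j).prod (boxVec c)
      = (l.map fun j => shiftCoeff q j c ^ a j).prod
          • boxVec (c + fun i => if i ∈ l then a i else 0) := by
  induction l with
  | nil => simp; rfl
  | cons j l ih =>
    obtain ⟨hjl, hl⟩ := List.pairwise_cons.1 hl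
    have hj : j ∉ l := fun h => lt_irrefl j (hjl j h)
    have hrest : shiftCoeff q j (fun i => if i ∈ l then a i else 0) = 1 :=
      Finset.prod_eq_one fun i hi => by
        dsimp only
        rw [if_neg fun hil => (hjl i hil).not_gt (Finset.mem_Iio.1 hi), pow_zero]
    have hexp : ((c + fun i => if i ∈ l then a i else 0) + Pi.single j (a j))
        = c + fun i => if i ∈ j :: l then a i else 0 := by
      ext i
      by_cases hij : i = j
      · simp [hij, hj]
      · simp [hij]
    rw [List.map_cons, List.prod_cons, Module.End.mul_apply, ih hl, map_smul, shiftOp_pow_boxVec,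
      shiftCoeff_add, hrest, mul_one, smul_smul, hexp, List.map_cons, List.prod_cons, mul_comm]

end ShiftOperators

section Pairing

variable (hqdiag : ∀ i, q i i = 1) (hqinv : ∀ i j, q i j * q j i = 1)

noncomputable def qciRep : QCI k n q m →ₐ[k] Module.End k (ExpBox m →₀ k) :=
  RingQuot.liftAlgHom k ⟨FreeAlgebra.lift k (shiftOp q m), fun _ _ h => by
    cases h with
    | pow i => rw [map_pow, FreeAlgebra.lift_ι_apply, shiftOp_pow_eq_zero, map_zero]
    | swap i j =>
      rw [map_mul, map_smul, map_mul, FreeAlgebra.lift_ι_apply, FreeAlgebra.lift_ι_apply,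
        shiftOp_mul_shiftOp q m hqdiag hqinv]⟩

theorem qciRep_qciX (i : Fin n) : qciRep q m hqdiag hqinv (X i) = shiftOp q m i := by
  rw [qciX, qciRep, RingQuot.liftAlgHom_mkAlgHom_apply, FreeAlgebra.lift_ι_apply]

/-- The structure constant of `x^b x^a = qciCoef a b • x^(a + b)`. -/
noncomputable def qciCoef (a b : Fin n → ℕ) : k :=
  ∏ j : Fin n, ∏ i ∈ Finset.Iio j, (q j i : k) ^ (a i * b j)

theorem qciCoef_ne_zero (a b : Fin n → ℕ) : qciCoef q a b ≠ 0 :=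
  Finset.prod_ne_zero_iff.2 fun _ _ => Finset.prod_ne_zero_iff.2 fun _ _ =>
    pow_ne_zero _ (Units.ne_zero _)

theorem qciCoef_comm (hqroot : ∀ i j, q i j ^ Nat.gcd (m i - 1) (m j - 1) = 1)
    {a b : Fin n → ℕ} (h : ∀ l, a l + b l = m l - 1) : qciCoef q a b = qciCoef q b a :=
  Finset.prod_congr rfl fun j _ => Finset.prod_congr rfl fun i _ => by
    obtain ⟨hj, hi⟩ := pow_gcd_eq_one.1 (hqroot j i)
    rw [← Units.val_pow_eq_pow_val, ← Units.val_pow_eq_pow_val,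
      pow_mul_eq_pow_mul_of_add_eq hi hj (h i) (h j)]

theorem qciRep_qciMonomial_boxVec (a c : Fin n → ℕ) :
    qciRep q m hqdiag hqinv (M a) (boxVec c) = qciCoef q c a • boxVec (c + a) := by
  have hrep : qciRep q m hqdiag hqinv (M a)
      = ((List.finRange n).map fun j => shiftOp q m j ^ a j).prod := by
    rw [qciMonomial, map_list_prod, List.map_map]
    exact congrArg _ (List.map_congr_left fun j _ => by simp [qciRep_qciX])
  rw [hrep, list_prod_shiftOp_pow_boxVec q m a c _ (List.pairwise_lt_finRange n)]
  simp [qciCoef, shiftCoeff, Fin.prod_univ_def, Finset.prod_pow, pow_mul]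

variable {m} in
noncomputable def topFunctional : (ExpBox m →₀ k) →ₗ[k] k :=
  Finsupp.linearCombination k fun a => if a.1 = (fun i => m i - 1) then 1 else 0

variable {m} in
theorem topFunctional_boxVec (hm : ∀ i, 0 < m i) (c : Fin n → ℕ) :
    topFunctional (boxVec c : ExpBox m →₀ k) = if c = (fun i => m i - 1) then 1 else 0 := by
  by_cases hc : ∀ i, c i < m i
  · rw [boxVec, dif_pos hc, topFunctional, Finsupp.linearCombination_single, smul_eq_mul, one_mul]
  · rw [boxVec, dif_neg hc, map_zero, if_neg]
    rintro rfl
    exact hc fun i => Nat.sub_lt (hm i) one_pos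

/-- The coefficient of the top monomial `x^(m - 1)`. -/
noncomputable def topCoeff : QCI k n q m →ₗ[k] k :=
  topFunctional ∘ₗ LinearMap.applyₗ (boxVec 0) ∘ₗ (qciRep q m hqdiag hqinv).toLinearMap

theorem topCoeff_qciMonomial_mul (hm : ∀ i, 0 < m i) (a b : Fin n → ℕ) :
    topCoeff q m hqdiag hqinv (M b * M a)
      = if ∀ l, a l + b l = m l - 1 then qciCoef q a b else 0 := by
  simp [topCoeff, qciRep_qciMonomial_boxVec, topFunctional_boxVec hm, funext_iff, qciCoef]

theorem topCoeff_mul_comm (hm : ∀ i, 0 < m i)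
    (hqroot : ∀ i j, q i j ^ Nat.gcd (m i - 1) (m j - 1) = 1) (u v : QCI k n q m) :
    topCoeff q m hqdiag hqinv (u * v) = topCoeff q m hqdiag hqinv (v * u) := by
  have hspan := span_range_qciMonomial q m
  have key : (LinearMap.mul k (QCI k n q m)).compr₂ (topCoeff q m hqdiag hqinv)
      = ((LinearMap.mul k (QCI k n q m)).compr₂ (topCoeff q m hqdiag hqinv)).flip := by
    refine LinearMap.ext_on_range hspan fun b => LinearMap.ext_on_range hspan fun a => ?_
    simp only [LinearMap.compr₂_apply, LinearMap.flip_apply, LinearMap.mul_apply',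
      topCoeff_qciMonomial_mul q m hqdiag hqinv hm]
    by_cases h : ∀ l, a l + b l = m l - 1
    · rw [if_pos h, if_pos fun l => (add_comm _ _).trans (h l), qciCoef_comm q m hqroot h]
    · rw [if_neg h, if_neg fun h' => h fun l => (add_comm _ _).trans (h' l)]
  exact LinearMap.congr_fun₂ key u v

noncomputable def qciPairing : QCI k n q m ⊗[k] QCI k n q m →ₗ[k] k :=
  topCoeff q m hqdiag hqinv ∘ₗ LinearMap.mul' k (QCI k n q m)

theorem qciPairing_qciMonomial (hm : ∀ i, 0 < m i)
    (hqroot : ∀ i j, q i j ^ Nat.gcd (m i - 1) (m j - 1) = 1) (a b : Fin n → ℕ) :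
    qciPairing q m hqdiag hqinv (M a ⊗ₜ[k] M b)
      = if ∀ l, a l + b l = m l - 1 then qciCoef q a b else 0 := by
  rw [qciPairing, LinearMap.comp_apply, LinearMap.mul'_apply,
    topCoeff_mul_comm q m hqdiag hqinv hm hqroot, topCoeff_qciMonomial_mul q m hqdiag hqinv hm]

/-- The dual basis of the standard monomials: `x^a` against `x^(m - 1 - a)`, normalised by the
value of the pairing on that pair. -/
noncomputable def qciCopairing : k →ₗ[k] QCI k n q m ⊗[k] QCI k n q m :=
  LinearMap.toSpanSingleton k _ <|
    ∑ a ∈ Fintype.piFinset fun i => Finset.range (m i),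
      (qciPairing q m hqdiag hqinv (M (fun l => m l - 1 - a l) ⊗ₜ[k] M a))⁻¹ • M a
        ⊗ₜ[k] M (fun l => m l - 1 - a l)

theorem pairingNondeg_qciPairing (hm : ∀ i, 0 < m i)
    (hqroot : ∀ i j, q i j ^ Nat.gcd (m i - 1) (m j - 1) = 1) :
    PairingNondeg k (qciPairing q m hqdiag hqinv) (qciCopairing q m hqdiag hqinv) := by
  refine pairingNondeg_toSpanSingleton_sum _ _ _ _ (span_range_qciMonomial q m) fun c => ?_
  by_cases hc : ∀ i, c i < m i
  · have hcs : c ∈ Fintype.piFinset fun i => Finset.range (m i) :=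
      Fintype.mem_piFinset.2 fun i => Finset.mem_range.2 (hc i)
    have hne : qciPairing q m hqdiag hqinv (M (fun l => m l - 1 - c l) ⊗ₜ[k] M c) ≠ 0 := by
      rw [qciPairing_qciMonomial q m hqdiag hqinv hm hqroot, if_pos fun l => by have := hc l; omega]
      exact qciCoef_ne_zero q _ _
    rw [Finset.sum_eq_single_of_mem c hcs]
    · rw [smul_smul, mul_inv_cancel₀ hne, one_smul]
    · intro a ha hac
      rw [qciPairing_qciMonomial q m hqdiag hqinv hm hqroot, if_neg, zero_smul]
      refine fun h => hac (funext fun l => ?_)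
      have := Finset.mem_range.1 (Fintype.mem_piFinset.1 ha l)
      have := h l
      have := hc l
      omega
  · obtain ⟨i, hi⟩ := not_forall.1 hc
    simp [qciMonomial_eq_zero q m (not_lt.1 hi)]

end Pairing

end TTP

open TTP in
theorem quantumCompleteIntersection_symmetric_frobenius_general
    {k : Type*} [Field k] (n : ℕ)
    (m : Fin n → ℕ) (hm : ∀ i, 2 ≤ m i)
    (q : Fin n → Fin n → kˣ)
    (hqdiag : ∀ i, q i i = 1)
    (hqinv : ∀ i j, q i j * q j i = 1)
    (hqroot : ∀ i j, q i j ^ Nat.gcd (m i - 1) (m j - 1) = 1) :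
    ∃ (β : QCI k n q m ⊗[k] QCI k n q m →ₗ[k] k)
      (α : k →ₗ[k] QCI k n q m ⊗[k] QCI k n q m),
      (∀ a b : Fin n → ℕ,
        β (qciMonomial k n q m a ⊗ₜ[k] qciMonomial k n q m b)
          = if ∀ l, a l + b l = m l - 1
            then ∏ j : Fin n, ∏ i ∈ Finset.Iio j, ((q j i : k) ^ (a i * b j))
            else 0)
      ∧ PairingAssoc k (LinearMap.mul' k (QCI k n q m)) β
      ∧ PairingNondeg k β α
      ∧ PairingSymm k β := by
  have hm' : ∀ i, 0 < m i := fun i => zero_lt_two.trans_le (hm i)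
  exact ⟨qciPairing q m hqdiag hqinv, qciCopairing q m hqdiag hqinv,
    qciPairing_qciMonomial q m hqdiag hqinv hm' hqroot,
    pairingAssoc_comp_mul' _,
    pairingNondeg_qciPairing q m hqdiag hqinv hm' hqroot,
    pairingSymm_comp_mul' (topCoeff_mul_comm q m hqdiag hqinv hm' hqroot)⟩

open TTP in
/-- Corollary 6.6 of the paper: if each `q_{ij}` is a root of
unity whose order divides `gcd(m_i - 1, m_j - 1)`, the quantum complete
intersection `Λ^n_{q,m}` is a symmetric Frobenius algebra, with the explicit
pairing `β(x^a ⊗ x^b) = (∏_{j} ∏_{i<j} q_{ji}^{a_i b_j}) ∏_l δ_{a_l+b_l, m_l-1}`. -/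
theorem quantumCompleteIntersection_symmetric_frobenius
    {k : Type*} [Field k] (n : ℕ) (hn : 2 ≤ n)
    (m : Fin n → ℕ) (hm : ∀ i, 2 ≤ m i)
    (q : Fin n → Fin n → kˣ)
    (hqdiag : ∀ i, q i i = 1)
    (hqinv : ∀ i j, q i j * q j i = 1)
    (hqroot : ∀ i j, q i j ^ Nat.gcd (m i - 1) (m j - 1) = 1) :
    ∃ (β : QCI k n q m ⊗[k] QCI k n q m →ₗ[k] k)
      (α : k →ₗ[k] QCI k n q m ⊗[k] QCI k n q m),
      (∀ a b : Fin n → ℕ,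
        β (qciMonomial k n q m a ⊗ₜ[k] qciMonomial k n q m b)
          = if ∀ l, a l + b l = m l - 1
            then ∏ j : Fin n, ∏ i ∈ Finset.Iio j, ((q j i : k) ^ (a i * b j))
            else 0)
      ∧ PairingAssoc k (LinearMap.mul' k (QCI k n q m)) β
      ∧ PairingNondeg k β α
      ∧ PairingSymm k β :=
  quantumCompleteIntersection_symmetric_frobenius_general n m hm q hqdiag hqinv hqroot
end

section
/- Let k be a field of characteristic p > 0, let n ≥ 2, let m = (p,…,p) ∈ ℕ^n, and let q = (q_{ij}) ∈ M_n(k^×) with q_{ii} = 1 and q_{ij}q_{ji} = 1 for all 1 ≤ i,j ≤ n. Then the quantum complete intersection Λ^n_{q,m} = k⟨x_1,…,x_n⟩/(x_i^{p}, x_i x_j − q_{ij} x_j x_i) is a Frobenius algebra. -/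
open scoped TensorProduct

namespace QCIAux
open TTP

variable {k : Type*} [Field k] {n : ℕ} (p : ℕ) (q : Fin n → Fin n → kˣ)

/-- Basis vector of the representation space. -/
noncomputable def e (σ : Fin n → ℕ) : (Fin n → ℕ) →₀ k := Finsupp.single σ 1

/-- Bump coordinate `i` by `m`. -/
def bump (i : Fin n) (m : ℕ) (σ : Fin n → ℕ) : Fin n → ℕ := Function.update σ i (σ i + m)

/-- Twist scalar. -/
noncomputable def tw (i : Fin n) (σ : Fin n → ℕ) : k :=
  ∏ j : Fin n, if j < i then ((q i j : k)) ^ (σ j) else 1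

lemma tw_ne_zero (i : Fin n) (σ : Fin n → ℕ) : tw q i σ ≠ 0 := by
  refine Finset.prod_ne_zero_iff.mpr fun j _ => ?_
  split_ifs
  · exact pow_ne_zero _ (Units.ne_zero _)
  · exact one_ne_zero

lemma tw_bump (m j : Fin n) (σ : Fin n → ℕ) :
    tw q m (bump j 1 σ) = (if j < m then (q m j : k) else 1) * tw q m σ := by
  unfold tw
  rw [← Finset.mul_prod_erase _ _ (Finset.mem_univ j),
      ← Finset.mul_prod_erase _ (fun l => if l < m then ((q m l : k)) ^ (σ l) else 1)
        (Finset.mem_univ j)]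
  have h1 : ∀ l ∈ Finset.univ.erase j,
      (if l < m then ((q m l : k)) ^ ((bump j 1 σ) l) else 1)
        = (if l < m then ((q m l : k)) ^ (σ l) else 1) := by
    intro l hl
    have : l ≠ j := (Finset.mem_erase.mp hl).1
    rw [bump, Function.update_of_ne this]
  rw [Finset.prod_congr rfl h1]
  have h2 : (bump j 1 σ) j = σ j + 1 := by rw [bump, Function.update_self]
  rw [h2]
  split_ifs
  · rw [pow_succ]; ring
  · ring

/-- The operator representing `x_i`. -/
noncomputable def Xop (i : Fin n) : ((Fin n → ℕ) →₀ k) →ₗ[k] ((Fin n → ℕ) →₀ k) :=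
  Finsupp.lsum k fun σ => LinearMap.toSpanSingleton k _
    (if σ i + 1 < p then tw q i σ • e (bump i 1 σ) else 0)

lemma Xop_apply (i : Fin n) (σ : Fin n → ℕ) :
    Xop p q i (e σ) = if σ i + 1 < p then tw q i σ • e (bump i 1 σ) else 0 := by
  rw [Xop, e, Finsupp.lsum_single, LinearMap.toSpanSingleton_apply, one_smul]

lemma end_ext {f g : ((Fin n → ℕ) →₀ k) →ₗ[k] ((Fin n → ℕ) →₀ k)}
    (h : ∀ σ, f (e σ) = g (e σ)) : f = g := by
  refine Finsupp.lhom_ext fun σ b => ?_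
  have : (Finsupp.single σ b : (Fin n → ℕ) →₀ k) = b • e σ := by
    rw [e, Finsupp.smul_single_one]
  rw [this, map_smul, map_smul, h]

lemma pow_apply_good (i : Fin n) :
    ∀ (m : ℕ) (σ : Fin n → ℕ), σ i + m < p →
      ∃ c : k, c ≠ 0 ∧ ((Xop p q i) ^ m) (e σ) = c • e (bump i m σ) := by
  intro m
  induction m with
  | zero =>
    intro σ _
    exact ⟨1, one_ne_zero, by simp [bump, Function.update_eq_self]⟩
  | succ m ih =>
    intro σ hσ
    have h1 : σ i + 1 < p := by omega
    obtain ⟨c, hc, hcs⟩ := ih (bump i 1 σ) (by rw [bump, Function.update_self]; omega)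
    refine ⟨tw q i σ * c, mul_ne_zero (tw_ne_zero q i σ) hc, ?_⟩
    have hb2 : bump i m (bump i 1 σ) = bump i (m + 1) σ := by
      funext l
      by_cases hl : l = i
      · subst hl
        simp only [bump, Function.update_self]
        omega
      · simp only [bump, Function.update_of_ne hl]
    rw [pow_succ, Module.End.mul_apply, Xop_apply, if_pos h1, map_smul, hcs, smul_smul, hb2]

lemma pow_apply_bad (i : Fin n) :
    ∀ (m : ℕ) (σ : Fin n → ℕ), 1 ≤ m → p ≤ σ i + m → ((Xop p q i) ^ m) (e σ) = 0 := by
  intro m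
  induction m with
  | zero => omega
  | succ m ih =>
    intro σ _ hp2
    rw [pow_succ, Module.End.mul_apply, Xop_apply]
    by_cases hc : σ i + 1 < p
    · rw [if_pos hc, map_smul, ih (bump i 1 σ) (by omega)
        (by rw [bump, Function.update_self]; omega), smul_zero]
    · rw [if_neg hc, map_zero]

lemma Xop_pow_p (hp : 0 < p) (i : Fin n) : (Xop p q i) ^ p = 0 := by
  refine end_ext fun σ => ?_
  rw [pow_apply_bad p q i p σ hp (by omega)]
  simp

lemma Xop_comm (hqdiag : ∀ i, q i i = 1) (hqinv : ∀ i j, q i j * q j i = 1) (i j : Fin n) :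
    Xop p q i * Xop p q j = (q i j : k) • (Xop p q j * Xop p q i) := by
  rcases eq_or_ne i j with rfl | hij
  · rw [hqdiag i]; simp
  refine end_ext fun σ => ?_
  have hbji : (bump j 1 σ) i = σ i := by rw [bump, Function.update_of_ne hij]
  have hbij : (bump i 1 σ) j = σ j := by rw [bump, Function.update_of_ne hij.symm]
  rw [Module.End.mul_apply, LinearMap.smul_apply, Module.End.mul_apply,
    Xop_apply, Xop_apply]
  by_cases hj : σ j + 1 < p <;> by_cases hi : σ i + 1 < p
  · rw [if_pos hj, if_pos hi, map_smul, map_smul, Xop_apply, Xop_apply, hbji, hbij,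
      if_pos hi, if_pos hj, smul_smul, smul_smul, smul_smul]
    have hb : bump i 1 (bump j 1 σ) = bump j 1 (bump i 1 σ) := by
      funext l
      simp only [bump, Function.update_apply]
      split_ifs <;> simp_all
    rw [hb]
    congr 1
    rw [tw_bump, tw_bump]
    have hq : (q i j : k) * (q j i : k) = 1 := by
      have := hqinv i j
      calc (q i j : k) * (q j i : k) = ((q i j * q j i : kˣ) : k) := by rw [Units.val_mul]
      _ = 1 := by rw [this]; rfl
    rcases lt_or_gt_of_ne hij with h | h
    · rw [if_neg (not_lt_of_gt h), if_pos h]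
      rw [one_mul]
      linear_combination (-(tw q i σ * tw q j σ)) * hq
    · rw [if_pos h, if_neg (not_lt_of_gt h)]
      ring
  · simp [Xop_apply, map_smul, hbji, hbij, hi, hj]
  · simp [Xop_apply, map_smul, hbji, hbij, hi, hj]
  · simp [Xop_apply, map_smul, hbji, hbij, hi, hj]

end QCIAux

namespace QCIAux
open TTP

variable {k : Type*} [Field k] {n : ℕ} (p : ℕ) (q : Fin n → Fin n → kˣ)

variable (hp : 0 < p) (hqdiag : ∀ i, q i i = 1) (hqinv : ∀ i j, q i j * q j i = 1)

/-- The representation of the quantum complete intersection. -/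
noncomputable def rep : QCI k n q (fun _ => p) →ₐ[k]
    Module.End k ((Fin n → ℕ) →₀ k) :=
  RingQuot.liftAlgHom k ⟨FreeAlgebra.lift k (fun i => Xop p q i), by
    rintro x y (⟨i⟩ | ⟨i, j⟩)
    · rw [map_pow, FreeAlgebra.lift_ι_apply, map_zero, Xop_pow_p p q hp]
    · rw [map_mul, map_smul, map_mul, FreeAlgebra.lift_ι_apply, FreeAlgebra.lift_ι_apply,
        Xop_comm p q hqdiag hqinv]⟩

lemma rep_x (i : Fin n) :
    rep p q hp hqdiag hqinv (qciX k n q (fun _ => p) i) = Xop p q i := by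
  rw [rep, qciX, RingQuot.liftAlgHom_mkAlgHom_apply, FreeAlgebra.lift_ι_apply]

/-- Monomial over a list of indices. -/
noncomputable def mon (l : List (Fin n)) (a : Fin n → ℕ) : QCI k n q (fun _ => p) :=
  (l.map fun i => qciX k n q (fun _ => p) i ^ a i).prod

/-- Operator monomial. -/
noncomputable def opMon (l : List (Fin n)) (a : Fin n → ℕ) :
    Module.End k ((Fin n → ℕ) →₀ k) :=
  (l.map fun i => Xop p q i ^ a i).prod

lemma rep_mon (l : List (Fin n)) (a : Fin n → ℕ) :
    rep p q hp hqdiag hqinv (mon p q l a) = opMon p q l a := by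
  rw [mon, opMon, map_list_prod, List.map_map]
  refine congrArg List.prod (List.map_congr_left fun i _ => ?_)
  simp [Function.comp, map_pow, rep_x]

/-- Add `a` on coordinates in `l`. -/
def addOn (l : List (Fin n)) (a σ : Fin n → ℕ) : Fin n → ℕ :=
  fun j => if j ∈ l then σ j + a j else σ j

lemma opMon_good (a σ : Fin n → ℕ) :
    ∀ l : List (Fin n), l.Nodup → (∀ i ∈ l, σ i + a i < p) →
      ∃ c : k, c ≠ 0 ∧ opMon p q l a (e σ) = c • e (addOn l a σ) := by
  intro l
  induction l with
  | nil =>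
    intro _ _
    have haddOn : addOn [] a σ = σ := by funext j; simp [addOn]
    exact ⟨1, one_ne_zero, by simp [opMon, e, haddOn]⟩
  | cons i l ih =>
    intro hnd hgood
    obtain ⟨c, hc, hcs⟩ := ih (List.nodup_cons.mp hnd).2 fun i' hi' => hgood i' (by simp [hi'])
    have hil : i ∉ l := (List.nodup_cons.mp hnd).1
    have hσ'i : addOn l a σ i = σ i := by simp [addOn, hil]
    obtain ⟨c', hc', hcs'⟩ := pow_apply_good p q i (a i) (addOn l a σ)
      (by rw [hσ'i]; exact hgood i (by simp))
    refine ⟨c * c', mul_ne_zero hc hc', ?_⟩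
    have hbeq : bump i (a i) (addOn l a σ) = addOn (i :: l) a σ := by
      funext j
      by_cases hj : j = i
      · subst hj
        simp [bump, Function.update_self, hσ'i, addOn, hil]
      · simp only [bump, Function.update_of_ne hj, addOn, List.mem_cons]
        by_cases hjl : j ∈ l <;> simp [hjl, hj]
    rw [opMon, List.map_cons, List.prod_cons, Module.End.mul_apply, ← opMon, hcs, map_smul,
      hcs', smul_smul, hbeq]

lemma opMon_bad (a σ : Fin n → ℕ) (hσ : ∀ j, σ j < p) :
    ∀ l : List (Fin n), l.Nodup → (∃ i ∈ l, p ≤ σ i + a i) →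
      opMon p q l a (e σ) = 0 := by
  intro l
  induction l with
  | nil => rintro _ ⟨i, hi, _⟩; simp at hi
  | cons i l ih =>
    intro hnd hbad
    have hil : i ∉ l := (List.nodup_cons.mp hnd).1
    rw [opMon, List.map_cons, List.prod_cons, Module.End.mul_apply, ← opMon]
    by_cases h : ∃ i' ∈ l, p ≤ σ i' + a i'
    · rw [ih (List.nodup_cons.mp hnd).2 h, map_zero]
    · push_neg at h
      obtain ⟨c, _, hcs⟩ := opMon_good p q a σ l (List.nodup_cons.mp hnd).2 h
      rw [hcs, map_smul]
      have hi : p ≤ σ i + a i := by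
        obtain ⟨i', hi', hpi'⟩ := hbad
        rcases List.mem_cons.mp hi' with rfl | hmem
        · exact hpi'
        · exact absurd hpi' (not_le.mpr (h i' hmem))
      have hσ'i : addOn l a σ i = σ i := by simp [addOn, hil]
      rw [pow_apply_bad p q i (a i) _ (by have := hσ i; omega) (by rw [hσ'i]; omega), smul_zero]

/-- The Frobenius functional: coefficient of the top monomial. -/
noncomputable def eps : QCI k n q (fun _ => p) →ₗ[k] k :=
  Finsupp.lapply (fun _ => p - 1) ∘ₗ LinearMap.applyₗ (e (fun _ => 0))
    ∘ₗ (rep p q hp hqdiag hqinv).toLinearMap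

/-- Full ordered monomial. -/
noncomputable def M (a : Fin n → ℕ) : QCI k n q (fun _ => p) :=
  mon p q (List.finRange n) a

lemma eps_M_mul (a b : Fin n → ℕ) (hb : ∀ i, b i < p) :
    (¬ (fun j => b j + a j) = (fun _ => p - 1) →
        eps p q hp hqdiag hqinv (M p q a * M p q b) = 0)
    ∧ ((fun j => b j + a j) = (fun _ => p - 1) →
        eps p q hp hqdiag hqinv (M p q a * M p q b) ≠ 0) := by
  have h0 : ∀ i ∈ List.finRange n, (fun _ : Fin n => 0) i + b i < p := fun i _ => by
    simpa using hb i
  obtain ⟨cb, hcb, hcbs⟩ := opMon_good p q b (fun _ => 0) (List.finRange n)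
    (List.nodup_finRange n) h0
  have haddb : addOn (List.finRange n) b (fun _ => 0) = b := by
    funext j; simp [addOn, List.mem_finRange]
  have heps : ∀ u, eps p q hp hqdiag hqinv u
      = (rep p q hp hqdiag hqinv u (e fun _ => 0)) (fun _ => p - 1) := fun u => rfl
  have hmul : eps p q hp hqdiag hqinv (M p q a * M p q b)
      = cb • ((opMon p q (List.finRange n) a (e b)) (fun _ => p - 1)) := by
    rw [heps, M, M, map_mul, Module.End.mul_apply, rep_mon, rep_mon, hcbs, haddb, map_smul]
    rfl
  constructor
  · intro hne
    by_cases hgood : ∀ i ∈ List.finRange n, b i + a i < p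
    · obtain ⟨ca, hca, hcas⟩ := opMon_good p q a b (List.finRange n)
        (List.nodup_finRange n) hgood
      have hadda : addOn (List.finRange n) a b = fun j => b j + a j := by
        funext j; simp [addOn, List.mem_finRange]
      rw [hmul, hcas, hadda]
      have : e (k := k) (fun j => b j + a j) (fun _ => p - 1) = 0 := by
        rw [e, Finsupp.single_apply, if_neg hne]
      simp [this]
    · push_neg at hgood
      obtain ⟨i, _, hbad⟩ := hgood
      rw [hmul, opMon_bad p q a b hb _ (List.nodup_finRange n)
        ⟨i, List.mem_finRange i, hbad⟩]
      simp
  · intro htop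
    have hgood : ∀ i ∈ List.finRange n, b i + a i < p := by
      intro i _
      have := congrFun htop i
      omega
    obtain ⟨ca, hca, hcas⟩ := opMon_good p q a b (List.finRange n)
      (List.nodup_finRange n) hgood
    have hadda : addOn (List.finRange n) a b = fun j => b j + a j := by
      funext j; simp [addOn, List.mem_finRange]
    rw [hmul, hcas, hadda, htop]
    have : e (k := k) (fun _ : Fin n => p - 1) (fun _ => p - 1) = 1 := by
      rw [e, Finsupp.single_apply, if_pos rfl]
    simp only [Finsupp.smul_apply, smul_eq_mul, this]
    exact mul_ne_zero hcb (by simpa using hca)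

end QCIAux

namespace QCIAux
open TTP

variable {k : Type*} [Field k] {n : ℕ} (p : ℕ) (q : Fin n → Fin n → kˣ)

lemma x_mul_x (i j : Fin n) :
    qciX k n q (fun _ => p) i * qciX k n q (fun _ => p) j
      = (q i j : k) • (qciX k n q (fun _ => p) j * qciX k n q (fun _ => p) i) := by
  have := RingQuot.mkAlgHom_rel k (QCIRel.swap (k := k) (n := n) (q := q)
    (m := fun _ => p) i j)
  rw [map_mul, map_smul, map_mul] at this
  exact this

lemma x_pow_p (i : Fin n) : qciX k n q (fun _ => p) i ^ p = 0 := by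
  have := RingQuot.mkAlgHom_rel k (QCIRel.pow (k := k) (n := n) (q := q)
    (m := fun _ => p) i)
  rw [map_pow, map_zero] at this
  exact this

lemma x_mul_pow (i j : Fin n) (m : ℕ) :
    qciX k n q (fun _ => p) i * qciX k n q (fun _ => p) j ^ m
      = ((q i j : k) ^ m) • (qciX k n q (fun _ => p) j ^ m * qciX k n q (fun _ => p) i) := by
  induction m with
  | zero => simp
  | succ m ih =>
    rw [pow_succ, ← mul_assoc, ih, smul_mul_assoc, mul_assoc, x_mul_x, mul_smul_comm,
      smul_smul, ← pow_succ, mul_assoc, pow_succ]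

lemma x_mul_mon (i : Fin n) (l : List (Fin n)) (a : Fin n → ℕ) :
    ∃ c : k, qciX k n q (fun _ => p) i * mon p q l a
      = c • (mon p q l a * qciX k n q (fun _ => p) i) := by
  induction l with
  | nil => exact ⟨1, by simp [mon]⟩
  | cons j l ih =>
    obtain ⟨c, hc⟩ := ih
    refine ⟨(q i j : k) ^ a j * c, ?_⟩
    rw [mon, List.map_cons, List.prod_cons, ← mon, ← mul_assoc, x_mul_pow, smul_mul_assoc,
      mul_assoc, hc, mul_smul_comm, smul_smul, mul_assoc]

lemma mon_congr (l : List (Fin n)) (a b : Fin n → ℕ) (h : ∀ j ∈ l, a j = b j) :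
    mon p q l a = mon p q l b := by
  unfold mon
  exact congrArg List.prod (List.map_congr_left fun j hj => by rw [h j hj])

/-- The span of the restricted monomials. -/
noncomputable def W (hp : 0 < p) : Submodule k (QCI k n q (fun _ => p)) :=
  Submodule.span k (Set.range fun σ : Fin n → Fin p => M p q (fun i => (σ i : ℕ)))

lemma M_mem_W (hp : 0 < p) (a : Fin n → ℕ) (ha : ∀ i, a i < p) :
    M p q a ∈ W p q hp := by
  refine Submodule.subset_span ⟨fun i => ⟨a i, ha i⟩, rfl⟩

lemma x_mul_M_mem (hp : 0 < p) (a : Fin n → ℕ) (ha : ∀ i, a i < p) (i : Fin n) :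
    qciX k n q (fun _ => p) i * M p q a ∈ W p q hp := by
  obtain ⟨s, t, hst⟩ := List.append_of_mem (List.mem_finRange i)
  have hnd : (s ++ i :: t).Nodup := hst ▸ List.nodup_finRange n
  have his : i ∉ s := fun h => (List.disjoint_of_nodup_append hnd) h (by simp)
  have hit : i ∉ t := (List.nodup_cons.mp (List.nodup_append.mp hnd).2.1).1
  have hsplit : ∀ b, M p q b
      = mon p q s b * (qciX k n q (fun _ => p) i ^ b i * mon p q t b) := by
    intro b
    rw [M, hst, mon, List.map_append, List.prod_append, List.map_cons, List.prod_cons]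
    rfl
  obtain ⟨c, hc⟩ := x_mul_mon p q i s a
  have key : qciX k n q (fun _ => p) i * M p q a
      = c • (mon p q s a * (qciX k n q (fun _ => p) i ^ (a i + 1) * mon p q t a)) := by
    rw [hsplit a, ← mul_assoc, hc, smul_mul_assoc, mul_assoc, ← mul_assoc
      (qciX k n q (fun _ => p) i), ← pow_succ']
  by_cases hcase : a i + 1 < p
  · set a' := Function.update a i (a i + 1) with ha'def
    have hsa : mon p q s a = mon p q s a' := mon_congr p q s a a' fun j hj => by
      rw [ha'def, Function.update_of_ne (fun h => his (by simpa [h] using hj))]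
    have hta : mon p q t a = mon p q t a' := mon_congr p q t a a' fun j hj => by
      rw [ha'def, Function.update_of_ne (fun h => hit (by simpa [h] using hj))]
    have hxa : qciX k n q (fun _ => p) i ^ (a i + 1) = qciX k n q (fun _ => p) i ^ a' i := by
      rw [ha'def, Function.update_self]
    have hM' : mon p q s a * (qciX k n q (fun _ => p) i ^ (a i + 1) * mon p q t a)
        = M p q a' := by
      rw [hsa, hta, hxa, ← hsplit a']
    rw [key, hM']
    exact Submodule.smul_mem _ _ (M_mem_W p q hp a' fun j => by
      by_cases hj : j = i
      · subst hj; rw [ha'def, Function.update_self]; exact hcase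
      · rw [ha'def, Function.update_of_ne hj]; exact ha j)
  · have hpe : a i + 1 = p := by have := ha i; omega
    rw [key, hpe, x_pow_p, zero_mul, mul_zero, smul_zero]
    exact Submodule.zero_mem _

end QCIAux

namespace QCIAux
open TTP

variable {k : Type*} [Field k] {n : ℕ} (p : ℕ) (q : Fin n → Fin n → kˣ)

lemma x_mul_W (hp : 0 < p) (i : Fin n) {v : QCI k n q (fun _ => p)} (hv : v ∈ W p q hp) :
    qciX k n q (fun _ => p) i * v ∈ W p q hp := by
  induction hv using Submodule.span_induction with
  | mem x hx =>
    obtain ⟨σ, rfl⟩ := hx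
    exact x_mul_M_mem p q hp _ (fun j => (σ j).isLt) i
  | zero => rw [mul_zero]; exact Submodule.zero_mem _
  | add x y _ _ hx hy => rw [mul_add]; exact Submodule.add_mem _ hx hy
  | smul c x _ hx => rw [mul_smul_comm]; exact Submodule.smul_mem _ _ hx

lemma all_mem_W (hp : 0 < p) (u : QCI k n q (fun _ => p)) : u ∈ W p q hp := by
  obtain ⟨y, rfl⟩ := RingQuot.mkAlgHom_surjective k (QCIRel k n q (fun _ => p)) u
  have hM0 : M p q (fun _ => 0) = 1 := by
    rw [M, mon]
    exact List.prod_eq_one (by simp)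
  have hone : (1 : QCI k n q (fun _ => p)) ∈ W p q hp :=
    hM0 ▸ M_mem_W p q hp (fun _ => 0) (fun _ => hp)
  have key : ∀ y : FreeAlgebra k (Fin n), ∀ v ∈ W p q hp,
      RingQuot.mkAlgHom k (QCIRel k n q (fun _ => p)) y * v ∈ W p q hp := by
    intro y
    induction y using FreeAlgebra.induction with
    | grade0 r =>
      intro v hv
      rw [AlgHom.commutes, ← Algebra.smul_def]
      exact Submodule.smul_mem _ _ hv
    | grade1 i =>
      intro v hv
      exact x_mul_W p q hp i hv
    | mul y z hy hz =>
      intro v hv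
      rw [map_mul, mul_assoc]
      exact hy _ (hz v hv)
    | add y z hy hz =>
      intro v hv
      rw [map_add, add_mul]
      exact Submodule.add_mem _ (hy v hv) (hz v hv)
  simpa using key y 1 hone

/-- complementary exponent -/
def abar (p : ℕ) (σ : Fin n → Fin p) : Fin n → ℕ := fun j => p - 1 - σ j

/-- coercion of exponent -/
def cv (p : ℕ) (σ : Fin n → Fin p) : Fin n → ℕ := fun j => σ j

variable (hp : 0 < p) (hqdiag : ∀ i, q i i = 1) (hqinv : ∀ i j, q i j * q j i = 1)

lemma eps_pair_ne (σ : Fin n → Fin p) :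
    eps p q hp hqdiag hqinv (M p q (abar p σ) * M p q (cv p σ)) ≠ 0 := by
  refine (eps_M_mul p q hp hqdiag hqinv (abar p σ) (cv p σ) fun i => (σ i).isLt).2 ?_
  funext j
  have := (σ j).isLt
  simp only [abar, cv]
  omega

lemma eps_pair_zero (σ τ : Fin n → Fin p) (hne : τ ≠ σ) :
    eps p q hp hqdiag hqinv (M p q (abar p σ) * M p q (cv p τ)) = 0 := by
  refine (eps_M_mul p q hp hqdiag hqinv (abar p σ) (cv p τ) fun i => (τ i).isLt).1 ?_
  intro h
  apply hne
  funext j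
  have h1 := congrFun h j
  have h2 := (σ j).isLt
  have h3 := (τ j).isLt
  simp only [abar, cv] at h1
  exact Fin.ext (by omega)

end QCIAux


set_option maxHeartbeats 1000000 in
set_option synthInstance.maxHeartbeats 400000 in
open TTP in
/-- Corollary 6.7 of the paper: over a field of characteristic
`p > 0`, the quantum complete intersection `Λ^n_{q,(p,…,p)}` is a Frobenius
algebra. -/
theorem quantumCompleteIntersection_charP_frobenius
    {k : Type*} [Field k] (p : ℕ) (hp : 0 < p) [CharP k p]
    (n : ℕ) (hn : 2 ≤ n)
    (q : Fin n → Fin n → kˣ)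
    (hqdiag : ∀ i, q i i = 1)
    (hqinv : ∀ i j, q i j * q j i = 1) :
    ∃ (β : QCI k n q (fun _ => p) ⊗[k] QCI k n q (fun _ => p) →ₗ[k] k)
      (α : k →ₗ[k] QCI k n q (fun _ => p) ⊗[k] QCI k n q (fun _ => p)),
      PairingAssoc k (LinearMap.mul' k (QCI k n q (fun _ => p))) β
      ∧ PairingNondeg k β α := by
  classical
  let ε := QCIAux.eps p q hp hqdiag hqinv
  let β : QCI k n q (fun _ => p) ⊗[k] QCI k n q (fun _ => p) →ₗ[k] k :=
    ε ∘ₗ LinearMap.mul' k (QCI k n q (fun _ => p))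
  let u : (Fin n → Fin p) → k := fun σ =>
    ε (QCIAux.M p q (QCIAux.abar p σ) * QCIAux.M p q (QCIAux.cv p σ))
  let w : QCI k n q (fun _ => p) ⊗[k] QCI k n q (fun _ => p) := ∑ σ : Fin n → Fin p,
    (u σ)⁻¹ • (QCIAux.M p q (QCIAux.cv p σ) ⊗ₜ[k] QCIAux.M p q (QCIAux.abar p σ))
  refine ⟨β, LinearMap.toSpanSingleton k _ w, ?_, ?_⟩
  · unfold PairingAssoc
    refine TensorProduct.ext_threefold fun a b c => ?_
    simp only [LinearMap.comp_apply, LinearEquiv.coe_coe, TensorProduct.assoc_tmul,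
      TensorProduct.map_tmul, LinearMap.id_coe, id_eq, LinearMap.mul'_apply, β]
    rw [mul_assoc]
  · unfold PairingNondeg
    refine LinearMap.ext fun v => ?_
    have hv := QCIAux.all_mem_W p q hp v
    induction hv using Submodule.span_induction with
    | mem x hx =>
      obtain ⟨τ, rfl⟩ := hx
      simp only [LinearMap.comp_apply, LinearEquiv.coe_coe, TensorProduct.lid_symm_apply,
        TensorProduct.map_tmul, LinearMap.id_coe, id_eq,
        LinearMap.toSpanSingleton_apply, one_smul, LinearMap.id_apply]
      have hw : w ⊗ₜ[k] (QCIAux.M p q (QCIAux.cv p τ))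
          = ∑ σ : Fin n → Fin p, (u σ)⁻¹ •
            ((QCIAux.M p q (QCIAux.cv p σ) ⊗ₜ[k] QCIAux.M p q (QCIAux.abar p σ))
              ⊗ₜ[k] QCIAux.M p q (QCIAux.cv p τ)) := by
        rw [TensorProduct.sum_tmul]
        exact Finset.sum_congr rfl fun σ _ => by simp [TensorProduct.smul_tmul']
      rw [show (QCIAux.M p q fun i => ((τ i : ℕ))) = QCIAux.M p q (QCIAux.cv p τ) from rfl,
        hw, map_sum, map_sum, map_sum]
      rw [Finset.sum_eq_single τ ?_ ?_]
      · simp only [map_smul, TensorProduct.assoc_tmul, TensorProduct.map_tmul,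
          LinearMap.id_coe, id_eq, TensorProduct.rid_tmul, LinearMap.comp_apply,
          LinearMap.mul'_apply, β]
        rw [smul_smul, inv_mul_cancel₀ (QCIAux.eps_pair_ne p q hp hqdiag hqinv τ), one_smul]
      · intro σ _ hστ
        simp only [map_smul, TensorProduct.assoc_tmul, TensorProduct.map_tmul,
          LinearMap.id_coe, id_eq, TensorProduct.rid_tmul, LinearMap.comp_apply,
          LinearMap.mul'_apply, β]
        rw [QCIAux.eps_pair_zero p q hp hqdiag hqinv σ τ fun h => hστ h.symm, zero_smul,
          smul_zero]
      · intro h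
        exact absurd (Finset.mem_univ τ) h
    | zero => simp
    | add x y _ _ hx hy => rw [map_add, hx, hy]; simp
    | smul c x _ hx => rw [map_smul, hx]; simp
end
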